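/- arXiv:2210.07238 — 6 statements merged into one kernel-verified Lean document; each statement's English description precedes it below -/
import Mathlib

section
/- For every real x with |x| < 2, one has (arcsin(x/2))^2 / sqrt(4 - x^2) = \sum_{k=1}^\infty (binom(2k,k) x^{2k} / 16^k) * (H_{2k}^{(2)} - (1/4) H_k^{(2)}). -/
/-!
Write `c k = (2k choose k) / 4 ^ k` and `q k = ∑_{j<k} 1 / (2j+1)²`. For `E(y) = ∑ a k y^(2k)`,
`(√(1-y²) E(y))' = (∑ ((2k+2) a (k+1) - (2k+1) a k) y^(2k+1)) / √(1-y²)`.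
Since `(2k+2) c (k+1) = (2k+1) c k`, the choice `a = c` gives `∑ c k y^(2k) = 1 / √(1-y²)`, whose
termwise antiderivative is `arcsin y = ∑ c k y^(2k+1) / (2k+1)`. The choice `a = c q` then turns
the right-hand side into `arcsin y / √(1-y²) = (arcsin² y / 2)'`, so
`arcsin² y / (2√(1-y²)) = ∑ c k q k y^(2k)`. At `y = x/2` this is the theorem, because removing the
even terms from `H_{2k}^{(2)}` leaves `H_{2k}^{(2)} - H_k^{(2)} / 4 = q k`.
-/

open Finset Real

lemma summable_of_abs_le_mul_geometric {v : ℕ → ℝ} {C r : ℝ} (hr₀ : 0 ≤ r) (hr₁ : r < 1)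
    (hv : ∀ k, |v k| ≤ C * (k + 1) * r ^ k) : Summable v := by
  have hr : ‖r‖ < 1 := by rwa [norm_of_nonneg hr₀]
  have hbound : Summable fun k : ℕ => C * ((k : ℝ) ^ 1 * r ^ k + r ^ k) :=
    ((summable_pow_mul_geometric_of_norm_lt_one 1 hr).add
      (summable_geometric_of_norm_lt_one hr)).mul_left C
  exact .of_norm_bounded (hbound.congr fun k => by ring) hv

lemma summable_mul_pow_of_abs_le {b : ℕ → ℝ} {C : ℝ} (hb : ∀ k, |b k| ≤ C * (k + 1))
    {e : ℕ → ℕ} (he : ∀ k, k ≤ e k) {y : ℝ} (hy : |y| < 1) :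
    Summable fun k => b k * y ^ e k := by
  refine summable_of_abs_le_mul_geometric (C := C) (abs_nonneg y) hy fun k => ?_
  rw [abs_mul, abs_pow]
  exact mul_le_mul (hb k) (pow_le_pow_of_le_one (abs_nonneg y) hy.le (he k)) (by positivity)
    ((abs_nonneg _).trans (hb k))

lemma hasDerivAt_tsum_mul_pow {a : ℕ → ℝ} {C : ℝ} (ha : ∀ k, |a k| ≤ C) (p : ℕ) {y : ℝ}
    (hy : |y| < 1) :
    HasDerivAt (fun z => ∑' k, a k * z ^ (2 * k + p + 1))
      (∑' k, (2 * k + p + 1) * a k * y ^ (2 * k + p)) y := by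
  obtain ⟨r, hyr, hr₁⟩ := exists_between hy
  have hr₀ : 0 < r := (abs_nonneg y).trans_lt hyr
  have hC : 0 ≤ C := (abs_nonneg _).trans (ha 0)
  refine hasDerivAt_tsum_of_isPreconnected (t := Set.Ioo (-r) r) (y₀ := 0)
    (g := fun (k : ℕ) z => a k * z ^ (2 * k + p + 1))
    (g' := fun (k : ℕ) z => (2 * k + p + 1) * a k * z ^ (2 * k + p))
    (u := fun k : ℕ => C * (2 * k + p + 1) * r ^ k) ?_ isOpen_Ioo isPreconnected_Ioo
    (fun k z _ => ?_) (fun k z hz => ?_) ⟨by linarith, hr₀⟩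
    (summable_zero.congr fun k => by simp) (abs_lt.1 hyr)
  · refine summable_of_abs_le_mul_geometric hr₀.le hr₁ (C := C * (p + 2)) fun k => ?_
    have hk : (2 * k + p + 1 : ℝ) ≤ (p + 2) * (k + 1) := by
      nlinarith [(Nat.cast_nonneg k : (0 : ℝ) ≤ k), (Nat.cast_nonneg p : (0 : ℝ) ≤ p)]
    rw [abs_of_nonneg (by positivity)]
    calc C * (2 * k + p + 1) * r ^ k ≤ C * ((p + 2) * (k + 1)) * r ^ k := by gcongr
      _ = C * (p + 2) * (k + 1) * r ^ k := by ring
  · simpa [mul_comm, mul_left_comm] using (hasDerivAt_pow (2 * k + p + 1) z).const_mul (a k)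
  · have hzr : |z| ≤ r := (abs_lt.2 hz).le
    calc ‖(2 * k + p + 1) * a k * z ^ (2 * k + p)‖
        = (2 * k + p + 1) * |a k| * |z| ^ (2 * k + p) := by
          rw [Real.norm_eq_abs, abs_mul, abs_mul, abs_pow, abs_of_nonneg (by positivity)]
      _ ≤ (2 * k + p + 1) * C * r ^ k := by
          gcongr
          · exact ha k
          exact (pow_le_pow_left₀ (abs_nonneg z) hzr _).trans
            (pow_le_pow_of_le_one hr₀.le hr₁.le (show k ≤ 2 * k + p by omega))
      _ = C * (2 * k + p + 1) * r ^ k := by ring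

lemma hasDerivAt_tsum_mul_pow_two_mul {a : ℕ → ℝ} {C : ℝ} (ha : ∀ k, |a k| ≤ C) {y : ℝ}
    (hy : |y| < 1) :
    HasDerivAt (fun z => ∑' k, a k * z ^ (2 * k))
      (∑' k, (2 * k + 2) * a (k + 1) * y ^ (2 * k + 1)) y := by
  have hsplit : ∀ᶠ z in nhds y,
      ∑' k, a k * z ^ (2 * k) = a 0 + ∑' k, a (k + 1) * z ^ (2 * k + 1 + 1) := by
    filter_upwards [continuous_abs.continuousAt.eventually_lt continuousAt_const hy] with z hz
    have hC : 0 ≤ C := (abs_nonneg _).trans (ha 0)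
    rw [(summable_mul_pow_of_abs_le (C := C)
      (fun k => (ha k).trans (le_mul_of_one_le_right hC (by simp))) (fun k => by omega)
      hz).tsum_eq_zero_add]
    simp [mul_add]
  refine (((hasDerivAt_tsum_mul_pow (fun k => ha (k + 1)) 1 hy).const_add (a 0))
    |>.congr_of_eventuallyEq hsplit).congr_deriv (tsum_congr fun k => ?_)
  push_cast
  ring

lemma one_sub_sq_mul_tsum_sub {a : ℕ → ℝ} {C : ℝ} (ha : ∀ k, |a k| ≤ C) {y : ℝ} (hy : |y| < 1) :
    (1 - y ^ 2) * ∑' k, (2 * k + 2) * a (k + 1) * y ^ (2 * k + 1) - y * ∑' k, a k * y ^ (2 * k)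
      = ∑' k, ((2 * k + 2) * a (k + 1) - (2 * k + 1) * a k) * y ^ (2 * k + 1) := by
  have hC : 0 ≤ C := (abs_nonneg _).trans (ha 0)
  have hscaled (m : ℝ) (j : ℕ) (hm : 0 ≤ m) : |m * a j| ≤ m * C := by
    rw [abs_mul, abs_of_nonneg hm]
    exact mul_le_mul_of_nonneg_left (ha j) hm
  have hD : Summable fun k : ℕ => (2 * k + 2) * a (k + 1) * y ^ (2 * k + 1) :=
    summable_mul_pow_of_abs_le (C := 2 * C)
      (fun k => (hscaled _ _ (by positivity)).trans_eq (by ring)) (fun k => by omega) hy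
  have hK : Summable fun k : ℕ => 2 * k * a k * y ^ (2 * k + 1) :=
    summable_mul_pow_of_abs_le (C := 2 * C)
      (fun k => (hscaled _ _ (by positivity)).trans (by nlinarith)) (fun k => by omega) hy
  have hE : Summable fun k : ℕ => a k * y ^ (2 * k + 1) :=
    summable_mul_pow_of_abs_le (C := C)
      (fun k => (ha k).trans (le_mul_of_one_le_right hC (by simp))) (fun k => by omega) hy
  have hshift : y ^ 2 * ∑' k, (2 * k + 2) * a (k + 1) * y ^ (2 * k + 1)
      = ∑' k, 2 * k * a k * y ^ (2 * k + 1) := by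
    rw [hK.tsum_eq_zero_add, ← tsum_mul_left]
    simp only [CharP.cast_eq_zero, mul_zero, zero_mul, zero_add]
    exact tsum_congr fun k => by push_cast; ring
  have hodd : y * ∑' k, a k * y ^ (2 * k) = ∑' k, a k * y ^ (2 * k + 1) := by
    rw [← tsum_mul_left]
    exact tsum_congr fun k => by ring
  rw [sub_mul, one_mul, hshift, hodd, ← hD.tsum_sub hK, ← (hD.sub hK).tsum_sub hE]
  exact tsum_congr fun k => by ring

lemma hasDerivAt_sqrt_one_sub_sq_mul_tsum {a : ℕ → ℝ} {C : ℝ} (ha : ∀ k, |a k| ≤ C) {y : ℝ}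
    (hy : |y| < 1) :
    HasDerivAt (fun z => √(1 - z ^ 2) * ∑' k, a k * z ^ (2 * k))
      ((∑' k, ((2 * k + 2) * a (k + 1) - (2 * k + 1) * a k) * y ^ (2 * k + 1)) / √(1 - y ^ 2))
      y := by
  have hpos : 0 < 1 - y ^ 2 := sub_pos.2 ((sq_lt_one_iff_abs_lt_one y).2 hy)
  have hsqrt := ((hasDerivAt_pow 2 y).const_sub 1).sqrt hpos.ne'
  refine (hsqrt.mul (hasDerivAt_tsum_mul_pow_two_mul ha hy)).congr_deriv ?_
  rw [← one_sub_sq_mul_tsum_sub ha hy]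
  field_simp
  rw [sq_sqrt hpos.le]
  ring

lemma tsum_mul_zero_pow_two_mul (a : ℕ → ℝ) : ∑' k, a k * (0 : ℝ) ^ (2 * k) = a 0 := by
  rw [tsum_eq_single 0 fun k hk => by simp [hk]]
  simp

lemma eq_of_hasDerivAt_of_abs_lt {f g f' : ℝ → ℝ} (hf : ∀ z, |z| < 1 → HasDerivAt f (f' z) z)
    (hg : ∀ z, |z| < 1 → HasDerivAt g (f' z) z) (h₀ : f 0 = g 0) {y : ℝ} (hy : |y| < 1) :
    f y = g y :=
  isOpen_Ioo.eqOn_of_deriv_eq isPreconnected_Ioo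
    (fun z hz => (hf z (abs_lt.2 hz)).differentiableAt.differentiableWithinAt)
    (fun z hz => (hg z (abs_lt.2 hz)).differentiableAt.differentiableWithinAt)
    (fun z hz => by rw [(hf z (abs_lt.2 hz)).deriv, (hg z (abs_lt.2 hz)).deriv])
    (by norm_num : (0 : ℝ) ∈ Set.Ioo (-1) 1) h₀ (abs_lt.1 hy)

lemma hasDerivAt_arcsin_of_abs_lt {z : ℝ} (hz : |z| < 1) :
    HasDerivAt arcsin (1 / √(1 - z ^ 2)) z :=
  hasDerivAt_arcsin (by rintro rfl; norm_num at hz) (by rintro rfl; norm_num at hz)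

lemma abs_centralBinom_div_four_pow_le_one (k : ℕ) : |(Nat.centralBinom k : ℝ) / 4 ^ k| ≤ 1 := by
  rw [abs_of_nonneg (by positivity), div_le_one (by positivity)]
  exact_mod_cast Nat.centralBinom_le_four_pow k

lemma two_mul_add_two_mul_centralBinom_div_four_pow_succ (k : ℕ) :
    (2 * k + 2) * ((Nat.centralBinom (k + 1) : ℝ) / 4 ^ (k + 1))
      = (2 * k + 1) * (Nat.centralBinom k / 4 ^ k) := by
  have h : ((k : ℝ) + 1) * Nat.centralBinom (k + 1) = 2 * (2 * k + 1) * Nat.centralBinom k := by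
    exact_mod_cast Nat.succ_mul_centralBinom_succ k
  rw [pow_succ]
  field_simp
  linear_combination 2 * h

noncomputable def oddInvSqSum (k : ℕ) : ℝ := ∑ j ∈ range k, 1 / (2 * (j : ℝ) + 1) ^ 2

lemma oddInvSqSum_succ (k : ℕ) :
    oddInvSqSum (k + 1) = oddInvSqSum k + 1 / (2 * (k : ℝ) + 1) ^ 2 :=
  sum_range_succ _ _

lemma oddInvSqSum_nonneg (k : ℕ) : 0 ≤ oddInvSqSum k := by
  unfold oddInvSqSum; positivity

lemma oddInvSqSum_le_two (k : ℕ) : oddInvSqSum k ≤ 2 := by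
  calc oddInvSqSum k ≤ ∑ j ∈ range k, ((j + 1 : ℕ) ^ 2 : ℝ)⁻¹ := by
        refine sum_le_sum fun j _ => ?_
        rw [one_div]; push_cast
        gcongr; linarith
    _ = ∑ i ∈ Ioo 0 (k + 1), ((i : ℝ) ^ 2)⁻¹ := by
        rw [range_eq_Ico, sum_Ico_add' (fun i : ℕ => ((i : ℝ) ^ 2)⁻¹), Ico_add_one_left_eq_Ioo]
    _ ≤ 2 / ((0 : ℕ) + 1) := sum_Ioo_inv_sq_le 0 (k + 1)
    _ = 2 := by norm_num

lemma sum_Icc_inv_sq_two_mul_sub (m : ℕ) :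
    (∑ j ∈ Icc 1 (2 * m), (1 : ℝ) / (j : ℝ) ^ 2) - 1 / 4 * ∑ j ∈ Icc 1 m, (1 : ℝ) / (j : ℝ) ^ 2
      = oddInvSqSum m := by
  induction m with
  | zero => simp [oddInvSqSum]
  | succ m ih =>
    rw [show 2 * (m + 1) = 2 * m + 1 + 1 by ring, sum_Icc_succ_top (by omega),
      sum_Icc_succ_top (by omega), sum_Icc_succ_top (by omega), oddInvSqSum_succ, ← ih]
    push_cast
    field_simp
    ring

theorem sqrt_one_sub_sq_mul_tsum_centralBinom {y : ℝ} (hy : |y| < 1) :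
    √(1 - y ^ 2) * ∑' k, (Nat.centralBinom k : ℝ) / 4 ^ k * y ^ (2 * k) = 1 := by
  refine eq_of_hasDerivAt_of_abs_lt
    (f := fun z => √(1 - z ^ 2) * ∑' k, (Nat.centralBinom k : ℝ) / 4 ^ k * z ^ (2 * k))
    (f' := fun _ => 0) (g := fun _ => 1) (fun z hz => ?_)
    (fun z _ => hasDerivAt_const z 1) (by simp [tsum_mul_zero_pow_two_mul]) hy
  simpa [two_mul_add_two_mul_centralBinom_div_four_pow_succ] using
    hasDerivAt_sqrt_one_sub_sq_mul_tsum abs_centralBinom_div_four_pow_le_one hz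

theorem arcsin_eq_tsum {y : ℝ} (hy : |y| < 1) :
    arcsin y = ∑' k, (Nat.centralBinom k : ℝ) / 4 ^ k / (2 * k + 1) * y ^ (2 * k + 1) := by
  refine eq_of_hasDerivAt_of_abs_lt (f := arcsin)
    (g := fun z => ∑' k, (Nat.centralBinom k : ℝ) / 4 ^ k / (2 * k + 1) * z ^ (2 * k + 1))
    (f' := fun z => 1 / √(1 - z ^ 2)) (fun z hz => ?_) (fun z hz => ?_) (by simp) hy
  · exact hasDerivAt_arcsin_of_abs_lt hz
  · have hbound (k : ℕ) : |(Nat.centralBinom k : ℝ) / 4 ^ k / (2 * k + 1)| ≤ 1 := by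
      rw [abs_div, abs_of_pos (by positivity : (0 : ℝ) < 2 * k + 1)]
      exact div_le_one_of_le₀ ((abs_centralBinom_div_four_pow_le_one k).trans (by simp))
        (by positivity)
    have hsqrt := sqrt_one_sub_sq_mul_tsum_centralBinom hz
    convert hasDerivAt_tsum_mul_pow hbound 0 hz using 1
    rw [one_div, eq_comm, inv_eq_of_mul_eq_one_right hsqrt]
    exact tsum_congr fun k => by simp only [Nat.cast_zero, add_zero]; field_simp

theorem sqrt_one_sub_sq_mul_tsum_eq_arcsin_sq {y : ℝ} (hy : |y| < 1) :
    √(1 - y ^ 2) * ∑' k, (Nat.centralBinom k : ℝ) / 4 ^ k * oddInvSqSum k * y ^ (2 * k)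
      = arcsin y ^ 2 / 2 := by
  have hbound (k : ℕ) : |(Nat.centralBinom k : ℝ) / 4 ^ k * oddInvSqSum k| ≤ 2 := by
    rw [abs_mul, abs_of_nonneg (oddInvSqSum_nonneg k)]
    nlinarith [abs_centralBinom_div_four_pow_le_one k, oddInvSqSum_le_two k,
      oddInvSqSum_nonneg k, abs_nonneg ((Nat.centralBinom k : ℝ) / 4 ^ k)]
  have hrec (k : ℕ) :
      (2 * k + 2) * ((Nat.centralBinom (k + 1) : ℝ) / 4 ^ (k + 1) * oddInvSqSum (k + 1))
        - (2 * k + 1) * ((Nat.centralBinom k : ℝ) / 4 ^ k * oddInvSqSum k)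
        = (Nat.centralBinom k : ℝ) / 4 ^ k / (2 * k + 1) := by
    rw [oddInvSqSum_succ, ← mul_assoc, two_mul_add_two_mul_centralBinom_div_four_pow_succ]
    field_simp
    ring
  refine eq_of_hasDerivAt_of_abs_lt
    (f := fun z =>
      √(1 - z ^ 2) * ∑' k, (Nat.centralBinom k : ℝ) / 4 ^ k * oddInvSqSum k * z ^ (2 * k))
    (g := fun z => arcsin z ^ 2 / 2) (f' := fun z => arcsin z / √(1 - z ^ 2))
    (fun z hz => ?_) (fun z hz => ?_) (by simp [tsum_mul_zero_pow_two_mul, oddInvSqSum]) hy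
  · simpa only [hrec, ← arcsin_eq_tsum hz] using hasDerivAt_sqrt_one_sub_sq_mul_tsum hbound hz
  · refine (((hasDerivAt_arcsin_of_abs_lt hz).fun_pow 2).div_const 2).congr_deriv ?_
    norm_num
    ring

theorem arcsin_sq_div_sqrt (x : ℝ) (hx : |x| < 2) :
    (Real.arcsin (x / 2)) ^ 2 / Real.sqrt (4 - x ^ 2) =
      ∑' k : ℕ,
        (Nat.choose (2 * (k + 1)) (k + 1) : ℝ) * x ^ (2 * (k + 1)) / 16 ^ (k + 1) *
          ((∑ j ∈ Finset.Icc 1 (2 * (k + 1)), (1 : ℝ) / (j : ℝ) ^ 2) -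
            (1 / 4) * ∑ j ∈ Finset.Icc 1 (k + 1), (1 : ℝ) / (j : ℝ) ^ 2) := by
  have hy : |x / 2| < 1 := by rw [abs_div, abs_two]; linarith
  have hpos : 0 < √(1 - (x / 2) ^ 2) :=
    sqrt_pos.2 (sub_pos.2 ((sq_lt_one_iff_abs_lt_one _).2 hy))
  have hsqrt : √(4 - x ^ 2) = 2 * √(1 - (x / 2) ^ 2) := by
    rw [show 4 - x ^ 2 = 2 ^ 2 * (1 - (x / 2) ^ 2) by ring, sqrt_mul (by norm_num),
      sqrt_sq zero_le_two]
  have hterm (k : ℕ) :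
      (Nat.choose (2 * (k + 1)) (k + 1) : ℝ) * x ^ (2 * (k + 1)) / 16 ^ (k + 1) *
          ((∑ j ∈ Icc 1 (2 * (k + 1)), (1 : ℝ) / (j : ℝ) ^ 2) -
            (1 / 4) * ∑ j ∈ Icc 1 (k + 1), (1 : ℝ) / (j : ℝ) ^ 2)
        = (Nat.centralBinom (k + 1) : ℝ) / 4 ^ (k + 1) * oddInvSqSum (k + 1)
          * (x / 2) ^ (2 * (k + 1)) := by
    rw [sum_Icc_inv_sq_two_mul_sub, ← Nat.centralBinom_eq_two_mul_choose, div_pow, pow_mul,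
      pow_mul, show (16 : ℝ) ^ (k + 1) = (2 ^ 2) ^ (k + 1) * 4 ^ (k + 1) by
        rw [← mul_pow]; norm_num]
    ring
  have hshift := Nat.succ_injective.tsum_eq
    (f := fun k => (Nat.centralBinom k : ℝ) / 4 ^ k * oddInvSqSum k * (x / 2) ^ (2 * k)) (by
      intro k hk
      obtain ⟨j, rfl⟩ := Nat.exists_eq_succ_of_ne_zero (n := k) <| by
        rintro rfl
        simp [oddInvSqSum] at hk
      exact ⟨j, rfl⟩)
  rw [tsum_congr hterm, hshift, hsqrt, ← div_div, ← sqrt_one_sub_sq_mul_tsum_eq_arcsin_sq hy,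
    mul_div_cancel_left₀ _ hpos.ne']
end

section
/- \sum_{k=0}^\infty binom(2k,k) / ((2k+1) 8^k) * (H_{2k}^{(2)} - (1/4) H_k^{(2)}) = sqrt(2) \pi^3 / 384. -/
/-!
Substituting `x = sin θ` turns `(1 - x²) f'' - x f'` into `d²f/dθ²`. On `f = ∑ bₙ xⁿ` this
operator acts on coefficients by `bₙ ↦ (n + 2)(n + 1) bₙ₊₂ - n² bₙ`, which kills the Taylor
coefficients of `arcsin` and sends those of `arcsin³ / 6` (the `arcsin` coefficient of `x^(2k+1)`
times `∑_{j<k} 1/(2j+1)²`) to those of `arcsin`. Since `θ'' = 0` and `(θ³/6)'' = θ` with the same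
initial data, the two series are `θ` and `θ³/6` at `x = sin θ`. Evaluating the second at
`sin(π/4) = √2/2` gives the sum, because `H_{2k}^{(2)} - H_k^{(2)}/4 = ∑_{j<k} 1/(2j+1)²`.
-/

open Real Set

noncomputable def powerSum (b : ℕ → ℝ) (x : ℝ) : ℝ := ∑' n, b n * x ^ n

def derivCoeff (b : ℕ → ℝ) (n : ℕ) : ℝ := (n + 1) * b (n + 1)

def HasPolyGrowth (b : ℕ → ℝ) : Prop := ∃ C : ℝ, ∃ m : ℕ, ∀ n, |b n| ≤ C * ((n : ℝ) + 1) ^ m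

/-- The coefficients of `(1 - x²) f'' - x f'` for `f = powerSum b`. -/
def chebyshevOpCoeff (b : ℕ → ℝ) (n : ℕ) : ℝ := (n + 2) * (n + 1) * b (n + 2) - n ^ 2 * b n

lemma powerSum_zero (b : ℕ → ℝ) : powerSum b 0 = b 0 := by
  rw [powerSum, tsum_eq_single 0 fun n hn => by simp [hn]]
  simp

lemma summable_add_one_pow_mul_geometric (m : ℕ) {r : ℝ} (hr0 : 0 < r) (hr1 : r < 1) :
    Summable fun n : ℕ => ((n : ℝ) + 1) ^ m * r ^ n := by
  have h := (summable_nat_add_iff (f := fun n : ℕ => (n : ℝ) ^ m * r ^ n) 1).mpr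
    (summable_pow_mul_geometric_of_norm_lt_one m (by rwa [norm_of_nonneg hr0.le]))
  refine (h.div_const r).congr fun n => ?_
  push_cast
  rw [pow_succ, ← mul_assoc, mul_div_assoc, div_self hr0.ne', mul_one]

lemma eqOn_of_hasDerivAt_of_isPreconnected {𝕜 G : Type*} [RCLike 𝕜] [NormedAddCommGroup G]
    [NormedSpace 𝕜 G] {f g f' : 𝕜 → G} {s : Set 𝕜} (hs : IsOpen s) (hs' : IsPreconnected s)
    (hf : ∀ x ∈ s, HasDerivAt f (f' x) x) (hg : ∀ x ∈ s, HasDerivAt g (f' x) x) {x₀ : 𝕜}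
    (hx₀ : x₀ ∈ s) (h : f x₀ = g x₀) : EqOn f g s :=
  hs.eqOn_of_deriv_eq hs' (fun x hx => (hf x hx).differentiableAt.differentiableWithinAt)
    (fun x hx => (hg x hx).differentiableAt.differentiableWithinAt)
    (fun x hx => by rw [(hf x hx).deriv, (hg x hx).deriv]) hx₀ h

lemma abs_sin_lt_one {θ : ℝ} (hθ : θ ∈ Ioo (-(π / 2)) (π / 2)) : |sin θ| < 1 := by
  rw [← sq_lt_one_iff_abs_lt_one]
  nlinarith [sin_sq_add_cos_sq θ, cos_pos_of_mem_Ioo hθ]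

lemma hasPolyGrowth_derivCoeff {b : ℕ → ℝ} (hb : HasPolyGrowth b) :
    HasPolyGrowth (derivCoeff b) := by
  obtain ⟨C, m, hC⟩ := hb
  have hC0 : 0 ≤ C := (abs_nonneg _).trans ((hC 0).trans_eq (by simp))
  refine ⟨C * 2 ^ m, m + 1, fun n => ?_⟩
  calc |derivCoeff b n| = ((n : ℝ) + 1) * |b (n + 1)| := by
        rw [derivCoeff, abs_mul, abs_of_nonneg (by positivity)]
    _ ≤ ((n : ℝ) + 1) * (C * (2 * ((n : ℝ) + 1)) ^ m) := by
        gcongr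
        refine (hC _).trans ?_
        gcongr
        push_cast
        linarith
    _ = C * 2 ^ m * ((n : ℝ) + 1) ^ (m + 1) := by rw [mul_pow]; ring

lemma abs_natCast_mul_mul_pow_sub_one_le {b : ℕ → ℝ} {C r y : ℝ} {m : ℕ}
    (hC : ∀ n, |derivCoeff b n| ≤ C * ((n : ℝ) + 1) ^ m) (hr0 : 0 < r) (hyr : |y| ≤ r) (n : ℕ) :
    |(n : ℝ) * b n * y ^ (n - 1)| ≤ C / r * (((n : ℝ) + 1) ^ m * r ^ n) := by
  have hC0 : 0 ≤ C := (abs_nonneg _).trans ((hC 0).trans_eq (by simp))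
  cases n with
  | zero => simp only [CharP.cast_eq_zero, zero_mul, abs_zero]; positivity
  | succ k =>
    calc |((k + 1 : ℕ) : ℝ) * b (k + 1) * y ^ (k + 1 - 1)| = |derivCoeff b k| * |y| ^ k := by
          rw [derivCoeff, Nat.add_sub_cancel, abs_mul, abs_pow]; push_cast; ring
      _ ≤ C * ((k : ℝ) + 1) ^ m * r ^ k := by gcongr; exact hC k
      _ ≤ C * (((k + 1 : ℕ) : ℝ) + 1) ^ m * r ^ k := by gcongr; linarith
      _ = C / r * ((((k + 1 : ℕ) : ℝ) + 1) ^ m * r ^ (k + 1)) := by field_simp; ring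

namespace HasPolyGrowth

variable {b : ℕ → ℝ}

lemma summable (hb : HasPolyGrowth b) {x : ℝ} (hx : |x| < 1) :
    Summable fun n => b n * x ^ n := by
  obtain ⟨C, m, hC⟩ := hb
  obtain ⟨r, hxr, hr1⟩ := exists_between hx
  have hr0 : 0 < r := (abs_nonneg x).trans_lt hxr
  refine .of_norm_bounded ((summable_add_one_pow_mul_geometric m hr0 hr1).mul_left C) fun n => ?_
  rw [norm_mul, norm_pow, Real.norm_eq_abs, Real.norm_eq_abs, ← mul_assoc]
  have : 0 ≤ C * ((n : ℝ) + 1) ^ m := (abs_nonneg _).trans (hC n)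
  gcongr
  exact hC n

lemma hasSum (hb : HasPolyGrowth b) {x : ℝ} (hx : |x| < 1) :
    HasSum (fun n => b n * x ^ n) (powerSum b x) :=
  (hb.summable hx).hasSum

lemma hasDerivAt_powerSum (hb : HasPolyGrowth b) {x : ℝ} (hx : |x| < 1) :
    HasDerivAt (powerSum b) (powerSum (derivCoeff b) x) x := by
  obtain ⟨C, m, hC⟩ := hasPolyGrowth_derivCoeff hb
  obtain ⟨r, hxr, hr1⟩ := exists_between hx
  have hr0 : 0 < r := (abs_nonneg x).trans_lt hxr
  have hderiv : HasDerivAt (powerSum b) (∑' n : ℕ, (n : ℝ) * b n * x ^ (n - 1)) x :=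
    hasDerivAt_tsum_of_isPreconnected (t := Ioo (-r) r) (y₀ := 0)
      (g := fun n y => b n * y ^ n) (g' := fun n y => (n : ℝ) * b n * y ^ (n - 1))
      ((summable_add_one_pow_mul_geometric m hr0 hr1).mul_left (C / r)) isOpen_Ioo
      isPreconnected_Ioo
      (fun n y _ => by
        simpa [mul_comm, mul_assoc, mul_left_comm] using (hasDerivAt_pow n y).const_mul (b n))
      (fun n y hy => abs_natCast_mul_mul_pow_sub_one_le hC hr0 (abs_lt.mpr hy).le n)
      ⟨by linarith, hr0⟩ (by simpa using hb.summable (x := 0) (by simp)) (abs_lt.mp hxr)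
  have hshift := (summable_nat_add_iff (f := fun n : ℕ => (n : ℝ) * b n * x ^ (n - 1)) 1).mp
    (((hasPolyGrowth_derivCoeff hb).summable hx).congr fun n => by
      rw [derivCoeff, Nat.add_sub_cancel]; push_cast; ring)
  convert hderiv using 1
  rw [hshift.tsum_eq_zero_add, powerSum]
  simp [derivCoeff]

lemma one_sub_sq_mul_powerSum_sub (hb : HasPolyGrowth b) {x : ℝ} (hx : |x| < 1) :
    (1 - x ^ 2) * powerSum (derivCoeff (derivCoeff b)) x
      - x * powerSum (derivCoeff b) x = powerSum (chebyshevOpCoeff b) x := by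
  have h1 := (hasPolyGrowth_derivCoeff hb).hasSum hx
  have h2 := (hasPolyGrowth_derivCoeff (hasPolyGrowth_derivCoeff hb)).hasSum hx
  have hx_mul : HasSum (fun n : ℕ => (n : ℝ) * b n * x ^ n) (x * powerSum (derivCoeff b) x) := by
    refine (hasSum_nat_add_iff' 1).mp ?_
    simpa [derivCoeff, pow_succ, mul_comm, mul_left_comm, mul_assoc] using h1.mul_left x
  have hx_sq_mul : HasSum (fun n : ℕ => (n : ℝ) * (n - 1) * b n * x ^ n)
      (x ^ 2 * powerSum (derivCoeff (derivCoeff b)) x) := by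
    have e : ∀ n : ℕ, x ^ 2 * (derivCoeff (derivCoeff b) n * x ^ n) =
        ((n + 2 : ℕ) : ℝ) * (((n + 2 : ℕ) : ℝ) - 1) * b (n + 2) * x ^ (n + 2) := fun n => by
      simp only [derivCoeff]; push_cast; ring
    have h := h2.mul_left (x ^ 2)
    simp only [e] at h
    refine (hasSum_nat_add_iff' 2).mp ?_
    simpa [Finset.sum_range_succ] using h
  calc _ = ∑' n : ℕ, (derivCoeff (derivCoeff b) n * x ^ n
          - ((n : ℝ) * (n - 1) * b n * x ^ n + n * b n * x ^ n)) := by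
        rw [(h2.sub (hx_sq_mul.add hx_mul)).tsum_eq]; ring
    _ = powerSum (chebyshevOpCoeff b) x := tsum_congr fun n => by
        simp only [derivCoeff, chebyshevOpCoeff]
        push_cast
        ring

theorem powerSum_sin_eqOn (hb : HasPolyGrowth b) {φ φ' φ'' : ℝ → ℝ}
    (hφ : ∀ θ ∈ Ioo (-(π / 2)) (π / 2), HasDerivAt φ (φ' θ) θ)
    (hφ' : ∀ θ ∈ Ioo (-(π / 2)) (π / 2), HasDerivAt φ' (φ'' θ) θ)
    (hφ'' : ∀ θ ∈ Ioo (-(π / 2)) (π / 2), powerSum (chebyshevOpCoeff b) (sin θ) = φ'' θ)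
    (h0 : b 0 = φ 0) (h1 : b 1 = φ' 0) :
    EqOn (fun θ => powerSum b (sin θ)) φ (Ioo (-(π / 2)) (π / 2)) := by
  have h0mem : (0 : ℝ) ∈ Ioo (-(π / 2)) (π / 2) := by simp [pi_pos]
  have hψ : ∀ θ ∈ Ioo (-(π / 2)) (π / 2),
      HasDerivAt (fun t => powerSum (derivCoeff b) (sin t) * cos t) (φ'' θ) θ := by
    intro θ hθ
    have hs := abs_sin_lt_one hθ
    refine ((((hasPolyGrowth_derivCoeff hb).hasDerivAt_powerSum hs).comp θ (hasDerivAt_sin θ)).mul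
      (hasDerivAt_cos θ)).congr_deriv ?_
    rw [← hφ'' θ hθ, ← hb.one_sub_sq_mul_powerSum_sub hs, ← cos_sq', Function.comp_apply]
    ring
  have hψφ := eqOn_of_hasDerivAt_of_isPreconnected isOpen_Ioo isPreconnected_Ioo hψ hφ' h0mem
    (by simp [powerSum_zero, derivCoeff, h1])
  refine eqOn_of_hasDerivAt_of_isPreconnected isOpen_Ioo isPreconnected_Ioo (fun θ hθ => ?_) hφ
    h0mem (by simp [powerSum_zero, h0])
  exact ((hb.hasDerivAt_powerSum (abs_sin_lt_one hθ)).comp θ (hasDerivAt_sin θ)).congr_deriv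
    (hψφ hθ)

end HasPolyGrowth

noncomputable def arcsinCoeff (n : ℕ) : ℝ :=
  if Even n then 0 else ((n / 2).centralBinom : ℝ) / (4 ^ (n / 2) * n)

/-- Taylor coefficients of `arcsin³ / 6`. -/
noncomputable def arcsinCubeCoeff (n : ℕ) : ℝ :=
  arcsinCoeff n * ∑ j ∈ Finset.range (n / 2), 1 / (2 * (j : ℝ) + 1) ^ 2

lemma arcsinCoeff_two_mul (k : ℕ) : arcsinCoeff (2 * k) = 0 := by
  simp [arcsinCoeff]

lemma arcsinCoeff_two_mul_add_one (k : ℕ) :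
    arcsinCoeff (2 * k + 1) = (k.centralBinom : ℝ) / (4 ^ k * (2 * k + 1)) := by
  have hk : (2 * k + 1) / 2 = k := by omega
  simp [arcsinCoeff, k.not_even_two_mul_add_one, hk]

lemma arcsinCubeCoeff_two_mul_add_one (k : ℕ) :
    arcsinCubeCoeff (2 * k + 1) =
      arcsinCoeff (2 * k + 1) * ∑ j ∈ Finset.range k, 1 / (2 * (j : ℝ) + 1) ^ 2 := by
  rw [arcsinCubeCoeff, show (2 * k + 1) / 2 = k by omega]

lemma abs_arcsinCoeff_le_one (n : ℕ) : |arcsinCoeff n| ≤ 1 := by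
  obtain ⟨k, rfl | rfl⟩ := n.even_or_odd'
  · simp [arcsinCoeff_two_mul]
  · rw [arcsinCoeff_two_mul_add_one, abs_of_nonneg (by positivity), div_le_one (by positivity)]
    calc (k.centralBinom : ℝ) ≤ 4 ^ k := by exact_mod_cast k.centralBinom_le_four_pow
      _ ≤ 4 ^ k * (2 * k + 1) :=
          le_mul_of_one_le_right (by positivity) (by linarith [k.cast_nonneg (α := ℝ)])

lemma hasPolyGrowth_arcsinCoeff : HasPolyGrowth arcsinCoeff :=
  ⟨1, 0, fun n => by simpa using abs_arcsinCoeff_le_one n⟩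

lemma hasPolyGrowth_arcsinCubeCoeff : HasPolyGrowth arcsinCubeCoeff := by
  refine ⟨1, 1, fun n => ?_⟩
  have hsum : ∑ j ∈ Finset.range (n / 2), 1 / (2 * (j : ℝ) + 1) ^ 2 ≤ (n : ℝ) + 1 := by
    calc _ ≤ ∑ _j ∈ Finset.range (n / 2), (1 : ℝ) := Finset.sum_le_sum fun j _ => by
            rw [div_le_one (by positivity)]; nlinarith [j.cast_nonneg (α := ℝ)]
      _ = ((n / 2 : ℕ) : ℝ) := by simp
      _ ≤ (n : ℝ) + 1 := by norm_cast; omega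
  have hnonneg : 0 ≤ ∑ j ∈ Finset.range (n / 2), 1 / (2 * (j : ℝ) + 1) ^ 2 := by positivity
  rw [arcsinCubeCoeff, abs_mul, abs_of_nonneg hnonneg, one_mul, pow_one]
  exact (mul_le_mul (abs_arcsinCoeff_le_one n) hsum (by positivity) zero_le_one).trans_eq
    (one_mul _)

lemma chebyshevOpCoeff_arcsinCoeff : chebyshevOpCoeff arcsinCoeff = 0 := by
  ext n
  obtain ⟨k, rfl | rfl⟩ := n.even_or_odd'
  · simp [chebyshevOpCoeff, arcsinCoeff_two_mul, show 2 * k + 2 = 2 * (k + 1) by ring]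
  · have h : ((k : ℝ) + 1) * (k + 1).centralBinom = 2 * (2 * k + 1) * k.centralBinom := by
      exact_mod_cast k.succ_mul_centralBinom_succ
    rw [chebyshevOpCoeff, show 2 * k + 1 + 2 = 2 * (k + 1) + 1 by ring,
      arcsinCoeff_two_mul_add_one, arcsinCoeff_two_mul_add_one, Pi.zero_apply]
    field_simp
    push_cast
    linear_combination 2 * (2 * (k : ℝ) + 1) * (2 * k + 3) * 4 ^ k * h

lemma chebyshevOpCoeff_arcsinCubeCoeff : chebyshevOpCoeff arcsinCubeCoeff = arcsinCoeff := by
  ext n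
  have hrec : ((n : ℝ) + 2) * (n + 1) * arcsinCoeff (n + 2) = n ^ 2 * arcsinCoeff n :=
    sub_eq_zero.mp (congrFun chebyshevOpCoeff_arcsinCoeff n)
  obtain ⟨k, rfl | rfl⟩ := n.even_or_odd'
  · simp [chebyshevOpCoeff, arcsinCubeCoeff, arcsinCoeff_two_mul,
      show 2 * k + 2 = 2 * (k + 1) by ring]
  · rw [show 2 * k + 1 + 2 = 2 * (k + 1) + 1 by ring] at hrec
    rw [chebyshevOpCoeff, show 2 * k + 1 + 2 = 2 * (k + 1) + 1 by ring,
      arcsinCubeCoeff_two_mul_add_one, arcsinCubeCoeff_two_mul_add_one, Finset.sum_range_succ]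
    have hk : ((2 * k + 1 : ℕ) : ℝ) ≠ 0 := by positivity
    set O := ∑ j ∈ Finset.range k, 1 / (2 * (j : ℝ) + 1) ^ 2
    have ht : 1 / (2 * (k : ℝ) + 1) ^ 2 = 1 / ((2 * k + 1 : ℕ) : ℝ) ^ 2 := by push_cast; ring
    rw [ht, ← mul_assoc, hrec]
    field_simp
    ring

theorem powerSum_arcsinCoeff_sin :
    EqOn (fun θ => powerSum arcsinCoeff (sin θ)) id (Ioo (-(π / 2)) (π / 2)) :=
  hasPolyGrowth_arcsinCoeff.powerSum_sin_eqOn (φ' := fun _ => 1) (φ'' := fun _ => 0)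
    (fun θ _ => hasDerivAt_id θ) (fun θ _ => hasDerivAt_const θ 1)
    (fun θ _ => by simp [chebyshevOpCoeff_arcsinCoeff, powerSum]) (by simp [arcsinCoeff])
    (by simp [arcsinCoeff])

theorem powerSum_arcsinCubeCoeff_sin :
    EqOn (fun θ => powerSum arcsinCubeCoeff (sin θ)) (fun θ => θ ^ 3 / 6)
      (Ioo (-(π / 2)) (π / 2)) :=
  hasPolyGrowth_arcsinCubeCoeff.powerSum_sin_eqOn (φ' := fun θ => θ ^ 2 / 2) (φ'' := id)
    (fun θ _ => ((hasDerivAt_pow 3 θ).div_const 6).congr_deriv (by ring))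
    (fun θ _ => ((hasDerivAt_pow 2 θ).div_const 2).congr_deriv (by simp))
    (fun θ hθ => by rw [chebyshevOpCoeff_arcsinCubeCoeff]; exact powerSum_arcsinCoeff_sin hθ)
    (by simp [arcsinCubeCoeff, arcsinCoeff]) (by simp [arcsinCubeCoeff])

lemma powerSum_eq_tsum_odd {b : ℕ → ℝ} (hb : ∀ k, b (2 * k) = 0) (x : ℝ) :
    powerSum b x = ∑' k, b (2 * k + 1) * x ^ (2 * k + 1) := by
  refine (Function.Injective.tsum_eq (g := fun k => 2 * k + 1)
    (fun i j (h : 2 * i + 1 = 2 * j + 1) => by omega) fun n hn => ?_).symm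
  obtain ⟨k, rfl | rfl⟩ := n.even_or_odd'
  · simp [hb] at hn
  · exact ⟨k, rfl⟩

lemma sum_Icc_two_mul_one_div_sq_sub (k : ℕ) :
    ∑ j ∈ Finset.Icc 1 (2 * k), (1 : ℝ) / (j : ℝ) ^ 2
        - 1 / 4 * ∑ j ∈ Finset.Icc 1 k, (1 : ℝ) / (j : ℝ) ^ 2 =
      ∑ j ∈ Finset.range k, 1 / (2 * (j : ℝ) + 1) ^ 2 := by
  induction k with
  | zero => simp
  | succ k ih =>
    rw [show 2 * (k + 1) = 2 * k + 1 + 1 by ring, Finset.sum_Icc_succ_top (by omega),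
      Finset.sum_Icc_succ_top (by omega), Finset.sum_Icc_succ_top (by omega),
      Finset.sum_range_succ, ← ih]
    push_cast
    field_simp
    ring

lemma sqrt_two_div_two_pow_two_mul_add_one (k : ℕ) :
    (√2 / 2) ^ (2 * k + 1) = √2 / 2 / 2 ^ k := by
  rw [pow_succ, pow_mul, div_pow, sq_sqrt zero_le_two, show (2 : ℝ) / 2 ^ 2 = 1 / 2 by norm_num,
    one_div_pow]
  ring

theorem sum_central_binom_harmonic2_8 :
    ∑' k : ℕ,
        (Nat.choose (2 * k) k : ℝ) / ((2 * (k : ℝ) + 1) * 8 ^ k) *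
          ((∑ j ∈ Finset.Icc 1 (2 * k), (1 : ℝ) / (j : ℝ) ^ 2) -
            (1 / 4) * ∑ j ∈ Finset.Icc 1 k, (1 : ℝ) / (j : ℝ) ^ 2) =
      Real.sqrt 2 * Real.pi ^ 3 / 384 := by
  have hval : powerSum arcsinCubeCoeff (sin (π / 4)) = (π / 4) ^ 3 / 6 :=
    powerSum_arcsinCubeCoeff_sin ⟨by linarith [pi_pos], by linarith [pi_pos]⟩
  rw [sin_pi_div_four,
    powerSum_eq_tsum_odd (fun k => by simp [arcsinCubeCoeff, arcsinCoeff_two_mul])] at hval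
  calc _ = ∑' k : ℕ, √2 * (arcsinCubeCoeff (2 * k + 1) * (√2 / 2) ^ (2 * k + 1)) :=
        tsum_congr fun k => by
          rw [sum_Icc_two_mul_one_div_sq_sub, arcsinCubeCoeff_two_mul_add_one,
            arcsinCoeff_two_mul_add_one, sqrt_two_div_two_pow_two_mul_add_one,
            Nat.centralBinom_eq_two_mul_choose, show (8 : ℝ) ^ k = 4 ^ k * 2 ^ k by
              rw [← mul_pow]; norm_num]
          field_simp
          rw [sq_sqrt zero_le_two]
          ring
    _ = √2 * π ^ 3 / 384 := by rw [tsum_mul_left, hval]; ring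
end

section
/- \sum_{k=1}^\infty H_{k-1}^{(2)} / (k^2 binom(2k,k)) = \pi^4 / 1944. -/
/-!
Put `a k = 1 / ((k + 1) ^ 2 * centralBinom (k + 1))` and `b k = H⁽²⁾ k * a k`. The even power
series `A x = ∑ a k * x ^ (2 * k + 2)` and `B x = ∑ b k * x ^ (2 * k + 2)` converge for `|x| < 2`,
and the recurrences satisfied by their coefficients say that `L = (4 - x ^ 2) d²/dx² - x d/dx`
maps `A` to the constant `4` and `B` to `4 * A`. The substitution `x = 2 sin t` turns `L` into
`d²/dt²`, so the initial conditions at `0` give `A (2 sin t) = 2 t ^ 2` and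
`B (2 sin t) = 2 t ^ 4 / 3` for `|t| < π / 2`. The sum is `B 1`, the value at `t = π / 6`.
-/

open Real Set Filter Topology

noncomputable section

lemma summable_add_one_pow_mul_geometric_s5 (p : ℕ) {ρ : ℝ} (h₀ : 0 ≤ ρ) (h₁ : ρ < 1) :
    Summable fun k : ℕ => ((k : ℝ) + 1) ^ p * ρ ^ k := by
  have hg : Summable fun k : ℕ => 2 ^ p * ((k : ℝ) ^ p * ρ ^ k) :=
    (summable_pow_mul_geometric_of_norm_lt_one (R := ℝ) p
      (by rwa [norm_of_nonneg h₀])).mul_left _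
  refine hg.of_norm_bounded_eventually_nat (eventually_atTop.mpr ⟨1, fun k hk => ?_⟩)
  have hk' : (1 : ℝ) ≤ k := by exact_mod_cast hk
  rw [norm_of_nonneg (by positivity), ← mul_assoc, ← mul_pow]
  gcongr
  linarith

lemma exists_abs_lt_of_mul_sq_lt {q x : ℝ} (hx : q * x ^ 2 < 1) : ∃ r, |x| < r ∧ q * r ^ 2 < 1 := by
  have hcont : ∀ᶠ r in 𝓝[>] |x|, q * r ^ 2 < 1 :=
    nhdsWithin_le_nhds <| (by fun_prop : Continuous fun r : ℝ => q * r ^ 2).continuousAt.eventually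
      (gt_mem_nhds (by simpa only [sq_abs] using hx))
  obtain ⟨r, hr, hxr⟩ := (hcont.and self_mem_nhdsWithin).exists
  exact ⟨r, hxr, hr⟩

def evenPowSeries (c : ℕ → ℝ) (m : ℕ) (x : ℝ) : ℝ := ∑' k, c k * x ^ (2 * k + m)

namespace evenPowSeries

def derivCoeff (c : ℕ → ℝ) (m k : ℕ) : ℝ := (2 * k + m + 1) * c k

/-- The coefficient of `x ^ (2 * k + 2)` in `(4 - x ^ 2) * f'' x - x * f' x` for
`f x = ∑ c k * x ^ (2 * k + 2)`; the constant term is `8 * c 0`. -/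
def opCoeff (c : ℕ → ℝ) (k : ℕ) : ℝ :=
  4 * (2 * k + 4) * (2 * k + 3) * c (k + 1) - (2 * k + 2) ^ 2 * c k

variable {c : ℕ → ℝ} {C q x : ℝ} {p m : ℕ}

lemma norm_mul_pow_le (hc : ∀ k, |c k| ≤ C * (k + 1) ^ p * q ^ k) {r y : ℝ}
    (hy : |y| ≤ r) (k : ℕ) :
    ‖c k * y ^ (2 * k + m)‖ ≤ C * r ^ m * (((k : ℝ) + 1) ^ p * (q * r ^ 2) ^ k) := by
  have hC : 0 ≤ C * (k + 1) ^ p * q ^ k := (abs_nonneg _).trans (hc k)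
  calc ‖c k * y ^ (2 * k + m)‖ = |c k| * |y| ^ (2 * k + m) := by
        rw [norm_mul, norm_pow, Real.norm_eq_abs, Real.norm_eq_abs]
    _ ≤ C * (k + 1) ^ p * q ^ k * r ^ (2 * k + m) :=
        mul_le_mul (hc k) (pow_le_pow_left₀ (abs_nonneg y) hy _) (by positivity) hC
    _ = C * r ^ m * (((k : ℝ) + 1) ^ p * (q * r ^ 2) ^ k) := by ring

lemma summable_majorant (hq : 0 ≤ q) {r : ℝ} (hr : q * r ^ 2 < 1) :
    Summable fun k : ℕ => C * r ^ m * (((k : ℝ) + 1) ^ p * (q * r ^ 2) ^ k) :=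
  (summable_add_one_pow_mul_geometric_s5 p (by positivity) hr).mul_left _

lemma summable (hc : ∀ k, |c k| ≤ C * (k + 1) ^ p * q ^ k) (hq : 0 ≤ q) (hx : q * x ^ 2 < 1) :
    Summable fun k => c k * x ^ (2 * k + m) :=
  .of_norm_bounded (summable_majorant (m := m) (p := p) (C := C) hq (by rwa [sq_abs]))
    (norm_mul_pow_le hc le_rfl)

lemma abs_derivCoeff_le (hc : ∀ k, |c k| ≤ C * (k + 1) ^ p * q ^ k) (k : ℕ) :
    |derivCoeff c m k| ≤ (m + 2) * C * (k + 1) ^ (p + 1) * q ^ k := by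
  have hC : 0 ≤ C * (k + 1) ^ p * q ^ k := (abs_nonneg _).trans (hc k)
  calc |derivCoeff c m k| = (2 * k + m + 1) * |c k| := by
        rw [derivCoeff, abs_mul, abs_of_nonneg (by positivity)]
    _ ≤ ((m + 2) * (k + 1)) * (C * (k + 1) ^ p * q ^ k) :=
        mul_le_mul (by nlinarith [(k.cast_nonneg : (0 : ℝ) ≤ k), (m.cast_nonneg : (0 : ℝ) ≤ m)])
          (hc k) (abs_nonneg _) (by positivity)
    _ = (m + 2) * C * (k + 1) ^ (p + 1) * q ^ k := by ring

lemma hasDerivAt (hc : ∀ k, |c k| ≤ C * (k + 1) ^ p * q ^ k) (hq : 0 ≤ q) (hx : q * x ^ 2 < 1) :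
    HasDerivAt (evenPowSeries c (m + 1)) (evenPowSeries (derivCoeff c m) m x) x := by
  obtain ⟨r, hxr, hr⟩ := exists_abs_lt_of_mul_sq_lt hx
  have hterm (k : ℕ) (y : ℝ) :
      HasDerivAt (fun y => c k * y ^ (2 * k + (m + 1))) (derivCoeff c m k * y ^ (2 * k + m)) y := by
    refine ((hasDerivAt_pow (2 * k + (m + 1)) y).const_mul (c k)).congr_deriv ?_
    rw [show 2 * k + (m + 1) - 1 = 2 * k + m by omega]
    simp only [derivCoeff]
    push_cast
    ring
  refine hasDerivAt_tsum_of_isPreconnected (summable_majorant hq hr) isOpen_Ioo isPreconnected_Ioo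
    (fun k y _ => hterm k y) (fun k y hy => norm_mul_pow_le (abs_derivCoeff_le hc)
      (abs_le.mpr ⟨hy.1.le, hy.2.le⟩) k) (y₀ := 0) ?_ ?_ (abs_lt.mp hxr)
  · exact ⟨by linarith [abs_nonneg x], by linarith [abs_nonneg x]⟩
  · exact summable_zero.congr fun k => by rw [zero_pow (by omega), mul_zero]

lemma const_mul (a : ℝ) (c : ℕ → ℝ) (m : ℕ) (x : ℝ) :
    evenPowSeries (fun k => a * c k) m x = a * evenPowSeries c m x := by
  simp only [evenPowSeries, mul_assoc, tsum_mul_left]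

lemma apply_zero (c : ℕ → ℝ) (hm : m ≠ 0) : evenPowSeries c m 0 = 0 := by
  simp [evenPowSeries, hm]

lemma chebyshevOp_eq (hc : ∀ k, |c k| ≤ C * (k + 1) ^ p * q ^ k) (hq : 0 ≤ q) (hx : q * x ^ 2 < 1) :
    (4 - x ^ 2) * evenPowSeries (derivCoeff (derivCoeff c 1) 0) 0 x
        - x * evenPowSeries (derivCoeff c 1) 1 x = 8 * c 0 + evenPowSeries (opCoeff c) 2 x := by
  have hc₁ := abs_derivCoeff_le (m := 1) hc
  have h₁ := (summable (m := 1) hc₁ hq hx).hasSum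
  have h₂ := (summable (m := 0) (abs_derivCoeff_le (m := 0) hc₁) hq hx).hasSum
  have h₂' := (hasSum_nat_add_iff' 1).mpr h₂
  have key := ((h₂'.mul_left 4).sub (h₂.mul_left (x ^ 2))).sub (h₁.mul_left x)
  have hterm (k : ℕ) : opCoeff c k * x ^ (2 * k + 2) =
      4 * (derivCoeff (derivCoeff c 1) 0 (k + 1) * x ^ (2 * (k + 1) + 0))
        - x ^ 2 * (derivCoeff (derivCoeff c 1) 0 k * x ^ (2 * k + 0))
        - x * (derivCoeff c 1 k * x ^ (2 * k + 1)) := by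
    simp only [opCoeff, derivCoeff]
    push_cast
    ring
  have hop : evenPowSeries (opCoeff c) 2 x = _ := (tsum_congr hterm).trans key.tsum_eq
  have h₀ : derivCoeff (derivCoeff c 1) 0 0 * x ^ (2 * 0 + 0) = 2 * c 0 := by
    norm_num [derivCoeff]
  rw [hop, Finset.sum_range_one, h₀]
  unfold evenPowSeries
  ring

end evenPowSeries

lemma eqOn_of_hasDerivAt_of_hasDerivAt {s : Set ℝ} (hs : IsOpen s) (hs' : IsPreconnected s)
    {f f' g g' h : ℝ → ℝ} {t₀ : ℝ} (hf : ∀ t ∈ s, HasDerivAt f (f' t) t)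
    (hf' : ∀ t ∈ s, HasDerivAt f' (h t) t) (hg : ∀ t ∈ s, HasDerivAt g (g' t) t)
    (hg' : ∀ t ∈ s, HasDerivAt g' (h t) t) (ht₀ : t₀ ∈ s) (h₀ : f t₀ = g t₀)
    (h₀' : f' t₀ = g' t₀) : EqOn f g s := by
  have hderiv : EqOn f' g' s :=
    hs.eqOn_of_deriv_eq hs' (fun t ht => (hf' t ht).differentiableAt.differentiableWithinAt)
      (fun t ht => (hg' t ht).differentiableAt.differentiableWithinAt)
      (fun t ht => (hf' t ht).deriv.trans (hg' t ht).deriv.symm) ht₀ h₀'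
  exact hs.eqOn_of_deriv_eq hs' (fun t ht => (hf t ht).differentiableAt.differentiableWithinAt)
    (fun t ht => (hg t ht).differentiableAt.differentiableWithinAt)
    (fun t ht => (hf t ht).deriv.trans ((hderiv ht).trans (hg t ht).deriv.symm)) ht₀ h₀

lemma hasDerivAt_comp_two_mul_sin {f : ℝ → ℝ} {f' t : ℝ} (hf : HasDerivAt f f' (2 * sin t)) :
    HasDerivAt (fun t => f (2 * sin t)) (2 * cos t * f') t :=
  (hf.comp t ((hasDerivAt_sin t).const_mul 2)).congr_deriv (mul_comm _ _)

lemma hasDerivAt_two_mul_cos_mul_comp_two_mul_sin {g : ℝ → ℝ} {g' t : ℝ}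
    (hg : HasDerivAt g g' (2 * sin t)) :
    HasDerivAt (fun t => 2 * cos t * g (2 * sin t))
      ((4 - (2 * sin t) ^ 2) * g' - 2 * sin t * g (2 * sin t)) t := by
  refine (((hasDerivAt_cos t).const_mul 2).mul (hasDerivAt_comp_two_mul_sin hg)).congr_deriv ?_
  rw [show (4 : ℝ) - (2 * sin t) ^ 2 = 4 * cos t ^ 2 by rw [cos_sq']; ring]
  ring

lemma quarter_mul_two_mul_sin_sq_lt {t : ℝ} (ht : t ∈ Ioo (-(π / 2)) (π / 2)) :
    1 / 4 * (2 * sin t) ^ 2 < 1 := by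
  nlinarith [sin_sq_add_cos_sq t, cos_pos_of_mem_Ioo ht]

section TwoMulSin

open evenPowSeries

variable {c : ℕ → ℝ} {C : ℝ} {p : ℕ}

lemma hasDerivAt_evenPowSeries_comp_two_mul_sin (hc : ∀ k, |c k| ≤ C * (k + 1) ^ p * (1 / 4) ^ k)
    {t : ℝ} (ht : t ∈ Ioo (-(π / 2)) (π / 2)) :
    HasDerivAt (fun t => evenPowSeries c 2 (2 * sin t))
      (2 * cos t * evenPowSeries (derivCoeff c 1) 1 (2 * sin t)) t :=
  hasDerivAt_comp_two_mul_sin (evenPowSeries.hasDerivAt hc (by norm_num)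
    (quarter_mul_two_mul_sin_sq_lt ht))

lemma hasDerivAt_deriv_evenPowSeries_comp_two_mul_sin
    (hc : ∀ k, |c k| ≤ C * (k + 1) ^ p * (1 / 4) ^ k) {t : ℝ} (ht : t ∈ Ioo (-(π / 2)) (π / 2)) :
    HasDerivAt (fun t => 2 * cos t * evenPowSeries (derivCoeff c 1) 1 (2 * sin t))
      (8 * c 0 + evenPowSeries (opCoeff c) 2 (2 * sin t)) t := by
  have hx := quarter_mul_two_mul_sin_sq_lt ht
  rw [← chebyshevOp_eq hc (by norm_num) hx]
  exact hasDerivAt_two_mul_cos_mul_comp_two_mul_sin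
    (evenPowSeries.hasDerivAt (abs_derivCoeff_le hc) (by norm_num) hx)

lemma evenPowSeries_comp_two_mul_sin_eqOn (hc : ∀ k, |c k| ≤ C * (k + 1) ^ p * (1 / 4) ^ k)
    {g g' g'' : ℝ → ℝ} (hg : ∀ t, HasDerivAt g (g' t) t) (hg' : ∀ t, HasDerivAt g' (g'' t) t)
    (hg₀ : g 0 = 0) (hg₀' : g' 0 = 0)
    (hop : ∀ t ∈ Ioo (-(π / 2)) (π / 2),
      8 * c 0 + evenPowSeries (opCoeff c) 2 (2 * sin t) = g'' t) :
    EqOn (fun t => evenPowSeries c 2 (2 * sin t)) g (Ioo (-(π / 2)) (π / 2)) := by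
  refine eqOn_of_hasDerivAt_of_hasDerivAt (t₀ := 0) isOpen_Ioo isPreconnected_Ioo
    (fun t ht => hasDerivAt_evenPowSeries_comp_two_mul_sin hc ht)
    (fun t ht => hop t ht ▸ hasDerivAt_deriv_evenPowSeries_comp_two_mul_sin hc ht)
    (fun t _ => hg t) (fun t _ => hg' t) ⟨by linarith [pi_pos], by linarith [pi_pos]⟩ ?_ ?_
  · simp [hg₀, apply_zero]
  · simp [hg₀', apply_zero]

end TwoMulSin

def harmonicSq (k : ℕ) : ℝ := ∑ j ∈ Finset.Icc 1 k, 1 / (j : ℝ) ^ 2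

def arcsinSqCoeff (k : ℕ) : ℝ := 1 / (((k : ℝ) + 1) ^ 2 * (k + 1).centralBinom)

def arcsinFourthCoeff (k : ℕ) : ℝ := harmonicSq k * arcsinSqCoeff k

lemma harmonicSq_succ (k : ℕ) : harmonicSq (k + 1) = harmonicSq k + 1 / ((k : ℝ) + 1) ^ 2 := by
  rw [harmonicSq, Finset.sum_Icc_succ_top (by omega), Nat.cast_succ, harmonicSq]

lemma harmonicSq_nonneg (k : ℕ) : 0 ≤ harmonicSq k :=
  Finset.sum_nonneg fun _ _ => by positivity

lemma harmonicSq_le (k : ℕ) : harmonicSq k ≤ π ^ 2 / 6 :=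
  sum_le_hasSum _ (fun _ _ => by positivity) hasSum_zeta_two

lemma arcsinSqCoeff_zero : arcsinSqCoeff 0 = 1 / 2 := by
  norm_num [arcsinSqCoeff, Nat.centralBinom_eq_two_mul_choose]

lemma arcsinFourthCoeff_zero : arcsinFourthCoeff 0 = 0 := by
  simp [arcsinFourthCoeff, harmonicSq]

lemma arcsinSqCoeff_nonneg (k : ℕ) : 0 ≤ arcsinSqCoeff k := by
  unfold arcsinSqCoeff
  positivity

lemma arcsinSqCoeff_le (k : ℕ) : arcsinSqCoeff k ≤ (1 / 4) ^ k := by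
  have h := Nat.four_pow_le_two_mul_self_mul_centralBinom (k + 1) k.succ_pos
  have h' : (4 : ℝ) ^ k ≤ ((k : ℝ) + 1) ^ 2 * (k + 1).centralBinom := by
    have : (4 : ℝ) ^ (k + 1) ≤ 2 * ((k : ℝ) + 1) * (k + 1).centralBinom := by exact_mod_cast h
    have hk : (0 : ℝ) ≤ k := k.cast_nonneg
    have hb : (0 : ℝ) ≤ (k + 1).centralBinom := Nat.cast_nonneg _
    rw [pow_succ] at this
    nlinarith [mul_nonneg (mul_nonneg hk (by linarith : (0 : ℝ) ≤ k + 1)) hb,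
      pow_nonneg (by norm_num : (0 : ℝ) ≤ 4) k]
  rw [arcsinSqCoeff, one_div_pow]
  exact one_div_le_one_div_of_le (by positivity) h'

lemma arcsinSqCoeff_succ (k : ℕ) :
    (2 * k + 4) * (2 * k + 3) * arcsinSqCoeff (k + 1) = ((k : ℝ) + 1) ^ 2 * arcsinSqCoeff k := by
  have h : ((k : ℝ) + 1 + 1) * (k + 1 + 1).centralBinom
      = 2 * (2 * k + 3) * (k + 1).centralBinom := by
    have := congrArg (Nat.cast : ℕ → ℝ) (Nat.succ_mul_centralBinom_succ (k + 1))
    push_cast at this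
    linear_combination this
  have hb : (0 : ℝ) < (k + 1).centralBinom := by exact_mod_cast Nat.centralBinom_pos _
  have hb' : (0 : ℝ) < (k + 1 + 1).centralBinom := by exact_mod_cast Nat.centralBinom_pos _
  rw [arcsinSqCoeff, arcsinSqCoeff]
  push_cast
  field_simp
  linear_combination (-((k : ℝ) + 2)) * h

open evenPowSeries in
lemma opCoeff_arcsinSqCoeff : opCoeff arcsinSqCoeff = 0 := by
  funext k
  simp only [opCoeff, Pi.zero_apply]
  linear_combination 4 * arcsinSqCoeff_succ k

open evenPowSeries in
lemma opCoeff_arcsinFourthCoeff : opCoeff arcsinFourthCoeff = fun k => 4 * arcsinSqCoeff k := by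
  funext k
  simp only [opCoeff, arcsinFourthCoeff, harmonicSq_succ]
  have hk : ((k : ℝ) + 1) ^ 2 ≠ 0 := by positivity
  field_simp
  linear_combination 4 * (harmonicSq k * ((k : ℝ) + 1) ^ 2 + 1) * arcsinSqCoeff_succ k

lemma evenPowSeries_arcsinSqCoeff_comp_two_mul_sin :
    EqOn (fun t => evenPowSeries arcsinSqCoeff 2 (2 * sin t)) (fun t => 2 * t ^ 2)
      (Ioo (-(π / 2)) (π / 2)) := by
  refine evenPowSeries_comp_two_mul_sin_eqOn (C := 1) (p := 0) (g' := fun t => 4 * t)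
    (g'' := fun _ => 4) (fun k => ?_) (fun t => ?_) (fun t => ?_) (by simp) (by simp)
    (fun t _ => ?_)
  · simpa [abs_of_nonneg (arcsinSqCoeff_nonneg k)] using arcsinSqCoeff_le k
  · simpa using ((hasDerivAt_pow 2 t).const_mul 2).congr_deriv (by ring)
  · simpa using (hasDerivAt_id t).const_mul 4
  · have hzero : evenPowSeries 0 2 (2 * sin t) = 0 := by simp [evenPowSeries]
    rw [opCoeff_arcsinSqCoeff, hzero, arcsinSqCoeff_zero]
    norm_num

lemma evenPowSeries_arcsinFourthCoeff_comp_two_mul_sin :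
    EqOn (fun t => evenPowSeries arcsinFourthCoeff 2 (2 * sin t)) (fun t => 2 / 3 * t ^ 4)
      (Ioo (-(π / 2)) (π / 2)) := by
  refine evenPowSeries_comp_two_mul_sin_eqOn (C := π ^ 2 / 6) (p := 0)
    (g' := fun t => 8 / 3 * t ^ 3) (g'' := fun t => 8 * t ^ 2) (fun k => ?_) (fun t => ?_)
    (fun t => ?_) (by simp) (by simp) (fun t ht => ?_)
  · rw [arcsinFourthCoeff,
      abs_of_nonneg (mul_nonneg (harmonicSq_nonneg k) (arcsinSqCoeff_nonneg k))]
    simpa using mul_le_mul (harmonicSq_le k) (arcsinSqCoeff_le k) (arcsinSqCoeff_nonneg k)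
      (by positivity)
  · simpa using ((hasDerivAt_pow 4 t).const_mul (2 / 3)).congr_deriv (by ring)
  · simpa using ((hasDerivAt_pow 3 t).const_mul (8 / 3)).congr_deriv (by ring)
  · have hA : evenPowSeries arcsinSqCoeff 2 (2 * sin t) = 2 * t ^ 2 :=
      evenPowSeries_arcsinSqCoeff_comp_two_mul_sin ht
    rw [opCoeff_arcsinFourthCoeff, evenPowSeries.const_mul, hA, arcsinFourthCoeff_zero]
    ring

theorem sum_harmonic2_inv_central_binom :
    ∑' k : ℕ,
        (∑ j ∈ Finset.Icc 1 k, (1 : ℝ) / (j : ℝ) ^ 2) /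
          ((k + 1 : ℝ) ^ 2 * (Nat.choose (2 * (k + 1)) (k + 1) : ℝ)) =
      Real.pi ^ 4 / 1944 := by
  have hπ : π / 6 ∈ Ioo (-(π / 2)) (π / 2) := ⟨by linarith [pi_pos], by linarith [pi_pos]⟩
  calc _ = evenPowSeries arcsinFourthCoeff 2 (2 * sin (π / 6)) := by
        rw [sin_pi_div_six, mul_one_div_cancel two_ne_zero]
        refine tsum_congr fun k => ?_
        rw [one_pow, mul_one, arcsinFourthCoeff, arcsinSqCoeff, harmonicSq,
          Nat.centralBinom_eq_two_mul_choose, mul_one_div]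
    _ = 2 / 3 * (π / 6) ^ 4 := evenPowSeries_arcsinFourthCoeff_comp_two_mul_sin hπ
    _ = π ^ 4 / 1944 := by ring
end
end

section
/- For every real x with -1/4 < x < 1/4, \sum_{k=0}^\infty binom(2k,k) H_k x^k = (2/sqrt(1-4x)) * log((1 + sqrt(1-4x)) / (2 sqrt(1-4x))). -/
/-!
Write `H_k = ∫₀¹ (1 - t^k) / (1 - t) dt`. Since `∑ binom(2k,k) y^k = (1 - 4y)^(-1/2)` (a
binomial series), exchanging sum and integral (the `k`-th term is dominated by `k 4^k |x|^k`)
turns the series into `∫₀¹ ((1 - 4x)^(-1/2) - (1 - 4xt)^(-1/2)) / (1 - t) dt`. Rationalising,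
the integrand is `4x / (s u (u + s))` with `s = √(1 - 4x)`, `u = √(1 - 4xt)`, whose
antiderivative is `-(2/s) log (u + s)`.
-/

open Finset Real
open scoped Nat

theorem four_pow_mul_ascPochhammer_eval_half (n : ℕ) :
    4 ^ n * (ascPochhammer ℝ n).eval (1 / 2) = n ! * n.centralBinom := by
  induction n with
  | zero => simp
  | succ n ih =>
    have h : ((n + 1) * (n + 1).centralBinom : ℝ) = 2 * (2 * n + 1) * n.centralBinom := by
      exact_mod_cast Nat.succ_mul_centralBinom_succ n
    rw [ascPochhammer_succ_eval, Nat.factorial_succ]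
    push_cast
    linear_combination (4 * n + 2 : ℝ) * ih - (n ! : ℝ) * h

-- `Ring.choose (1/2 + n - 1) n` is the `n`-th coefficient of `(1 - x)^(-1/2)` in
-- `Real.one_div_one_sub_rpow_hasFPowerSeriesOnBall_zero`.
theorem choose_add_sub_half_mul_four_pow (n : ℕ) :
    Ring.choose ((1 / 2 : ℝ) + n - 1) n * 4 ^ n = n.centralBinom := by
  have h := Ring.factorial_nsmul_multichoose_eq_ascPochhammer (1 / 2 : ℝ) n
  rw [Ring.multichoose_eq, Polynomial.ascPochhammer_smeval_eq_eval, nsmul_eq_mul] at h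
  have hf : (n ! : ℝ) ≠ 0 := by positivity
  apply mul_left_cancel₀ hf
  linear_combination (4 : ℝ) ^ n * h + four_pow_mul_ascPochhammer_eval_half n

theorem hasSum_centralBinom_mul_pow {y : ℝ} (hy : |y| < 1 / 4) :
    HasSum (fun n => (n.centralBinom : ℝ) * y ^ n) (1 / √(1 - 4 * y)) := by
  have h := (Real.one_div_one_sub_rpow_hasFPowerSeriesOnBall_zero (1 / 2)).hasSum
    (y := 4 * y) (by rw [← ENNReal.ofReal_one, Metric.eball_ofReal]; simp; linarith)
  simp only [FormalMultilinearSeries.ofScalars_apply_eq, zero_add, ← Real.sqrt_eq_rpow,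
    smul_eq_mul] at h
  simpa only [mul_pow, ← mul_assoc, choose_add_sub_half_mul_four_pow] using h

theorem integral_geom_sum_eq_sum_Icc_inv (k : ℕ) :
    ∫ t in (0 : ℝ)..1, ∑ j ∈ range k, t ^ j = ∑ j ∈ Icc 1 k, (1 : ℝ) / j := by
  induction k with
  | zero => simp
  | succ k ih =>
    simp only [sum_range_succ]
    rw [sum_Icc_succ_top (by omega), ← ih, intervalIntegral.integral_add
      ((continuous_finsetSum _ fun j _ => continuous_pow j).intervalIntegrable _ _)
      ((continuous_pow k).intervalIntegrable _ _), integral_pow]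
    simp

theorem summable_centralBinom_mul_mul_pow {r : ℝ} (hr0 : 0 ≤ r) (hr : r < 1 / 4) :
    Summable (fun k : ℕ => (k.centralBinom : ℝ) * k * r ^ k) := by
  refine .of_nonneg_of_le (fun k => by positivity) (fun k => ?_)
    (summable_pow_mul_geometric_of_norm_lt_one 1 (r := 4 * r)
      (by rw [norm_of_nonneg (by positivity)]; linarith))
  have h4 : (k.centralBinom : ℝ) ≤ 4 ^ k := by exact_mod_cast Nat.centralBinom_le_four_pow k
  calc (k.centralBinom : ℝ) * k * r ^ k ≤ 4 ^ k * k * r ^ k := by gcongr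
    _ = (k : ℝ) ^ 1 * (4 * r) ^ k := by ring

theorem one_sub_mul_pos {a t : ℝ} (ha : a < 1) (ht : t ∈ Set.Icc 0 1) : 0 < 1 - a * t := by
  rcases le_or_gt 0 a with h | h <;> nlinarith [ht.1, ht.2]

theorem inv_sqrt_sub_inv_sqrt_div_sub_one {x t : ℝ} (hx : x < 1 / 4) (ht : t ∈ Set.Icc 0 1)
    (ht1 : t ≠ 1) :
    (1 / √(1 - 4 * x * t) - 1 / √(1 - 4 * x)) / (t - 1) =
      4 * x / (√(1 - 4 * x) * √(1 - 4 * x * t) * (√(1 - 4 * x * t) + √(1 - 4 * x))) := by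
  have hs : 0 < 1 - 4 * x := by linarith
  have hu := one_sub_mul_pos (a := 4 * x) (by linarith) ht
  have hs2 := sq_sqrt hs.le
  have hu2 := sq_sqrt hu.le
  have : 0 < √(1 - 4 * x) := sqrt_pos.mpr hs
  have : 0 < √(1 - 4 * x * t) := sqrt_pos.mpr hu
  have : t - 1 ≠ 0 := sub_ne_zero.mpr ht1
  field_simp
  linear_combination hs2 - hu2

theorem hasSum_centralBinom_mul_pow_mul_geom_sum {x t : ℝ} (hx : |x| < 1 / 4)
    (ht : t ∈ Set.Ico 0 1) :
    HasSum (fun k => (k.centralBinom : ℝ) * x ^ k * ∑ j ∈ range k, t ^ j)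
      (4 * x / (√(1 - 4 * x) * √(1 - 4 * x * t) * (√(1 - 4 * x * t) + √(1 - 4 * x)))) := by
  have hxt : |x * t| < 1 / 4 := by
    rw [abs_mul, abs_of_nonneg ht.1]
    nlinarith [abs_nonneg x, ht.2]
  rw [← inv_sqrt_sub_inv_sqrt_div_sub_one (abs_lt.mp hx).2 (Set.Ico_subset_Icc_self ht) ht.2.ne,
    mul_assoc 4 x t]
  have hsub := ((hasSum_centralBinom_mul_pow hxt).sub (hasSum_centralBinom_mul_pow hx)).div_const
    (t - 1)
  refine hsub.congr_fun fun k => ?_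
  rw [geom_sum_eq ht.2.ne, mul_pow]
  ring

theorem hasDerivAt_log_sqrt_one_sub_mul_add {a s t : ℝ} (hs : 0 < s) (ht : 0 < 1 - a * t) :
    HasDerivAt (fun t => log (√(1 - a * t) + s))
      (-a / (2 * √(1 - a * t) * (√(1 - a * t) + s))) t := by
  have hu : 0 < √(1 - a * t) := sqrt_pos.mpr ht
  have hlin : HasDerivAt (fun t => 1 - a * t) (-a) t := by
    simpa using ((hasDerivAt_id t).const_mul a).const_sub 1
  refine (((hlin.sqrt ht.ne').add_const s).log (by positivity)).congr_deriv ?_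
  field_simp

theorem integral_four_mul_div_sqrt_mul_sqrt {x : ℝ} (hx : x < 1 / 4) :
    ∫ t in (0 : ℝ)..1,
        4 * x / (√(1 - 4 * x) * √(1 - 4 * x * t) * (√(1 - 4 * x * t) + √(1 - 4 * x))) =
      2 / √(1 - 4 * x) * log ((1 + √(1 - 4 * x)) / (2 * √(1 - 4 * x))) := by
  have hpos : ∀ t ∈ Set.uIcc (0 : ℝ) 1, 0 < 1 - 4 * x * t := fun t ht =>
    one_sub_mul_pos (by linarith) (by rwa [Set.uIcc_of_le zero_le_one] at ht)
  set s := √(1 - 4 * x)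
  have hs : 0 < s := sqrt_pos.mpr (by linarith)
  have hderiv : ∀ t ∈ Set.uIcc (0 : ℝ) 1,
      HasDerivAt (fun t => -(2 / s) * log (√(1 - 4 * x * t) + s))
      (4 * x / (s * √(1 - 4 * x * t) * (√(1 - 4 * x * t) + s))) t := by
    intro t ht
    refine ((hasDerivAt_log_sqrt_one_sub_mul_add hs (hpos t ht)).const_mul _).congr_deriv ?_
    have := sqrt_pos.mpr (hpos t ht)
    field_simp
  have hcont : ContinuousOn (fun t => 4 * x / (s * √(1 - 4 * x * t) * (√(1 - 4 * x * t) + s)))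
      (Set.uIcc 0 1) :=
    .div (by fun_prop) (by fun_prop) fun t ht => by
      have := sqrt_pos.mpr (hpos t ht)
      positivity
  rw [intervalIntegral.integral_eq_sub_of_hasDerivAt hderiv hcont.intervalIntegrable,
    log_div (by positivity) (by positivity)]
  have hs1 : √(1 - 4 * x * 1) = s := by rw [mul_one]
  simp only [mul_zero, sub_zero, sqrt_one, hs1, ← two_mul]
  ring

theorem norm_centralBinom_mul_pow_mul_geom_sum_le {x t : ℝ} (ht : t ∈ Set.Icc 0 1) (k : ℕ) :
    ‖(k.centralBinom : ℝ) * x ^ k * ∑ j ∈ range k, t ^ j‖ ≤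
      k.centralBinom * k * |x| ^ k := by
  have hgeom : ∑ j ∈ range k, t ^ j ≤ k := by
    simpa using sum_le_sum fun j (_ : j ∈ range k) => pow_le_one₀ ht.1 ht.2
  rw [norm_mul, norm_mul, norm_pow, norm_natCast, norm_of_nonneg (sum_nonneg fun j _ =>
    pow_nonneg ht.1 j), Real.norm_eq_abs]
  calc (k.centralBinom : ℝ) * |x| ^ k * ∑ j ∈ range k, t ^ j
      ≤ k.centralBinom * |x| ^ k * k := by gcongr
    _ = k.centralBinom * k * |x| ^ k := by ring

theorem hasSum_integral_centralBinom_mul_pow_mul_geom_sum {x : ℝ} (hx : |x| < 1 / 4) :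
    HasSum
      (fun k => ∫ t in (0 : ℝ)..1, (k.centralBinom : ℝ) * x ^ k * ∑ j ∈ range k, t ^ j)
      (∫ t in (0 : ℝ)..1,
        4 * x / (√(1 - 4 * x) * √(1 - 4 * x * t) * (√(1 - 4 * x * t) + √(1 - 4 * x)))) := by
  refine intervalIntegral.hasSum_integral_of_dominated_convergence
    (fun k _ => (k.centralBinom : ℝ) * k * |x| ^ k)
    (fun k => (by fun_prop : Continuous _).aestronglyMeasurable)
    (fun k => .of_forall fun t ht => ?_)
    (.of_forall fun t _ => summable_centralBinom_mul_mul_pow (abs_nonneg x) hx)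
    intervalIntegrable_const ?_
  · rw [Set.uIoc_of_le zero_le_one] at ht
    exact norm_centralBinom_mul_pow_mul_geom_sum_le (Set.Ioc_subset_Icc_self ht) k
  · filter_upwards [MeasureTheory.Measure.ae_ne MeasureTheory.volume 1] with t ht1 ht
    rw [Set.uIoc_of_le zero_le_one] at ht
    exact hasSum_centralBinom_mul_pow_mul_geom_sum hx ⟨ht.1.le, ht.2.lt_of_ne ht1⟩

theorem boyadzhiev (x : ℝ) (hx1 : -(1/4) < x) (hx2 : x < 1/4) :
    ∑' k : ℕ,
        (Nat.choose (2 * k) k : ℝ) * (∑ j ∈ Finset.Icc 1 k, (1 : ℝ) / (j : ℝ)) * x ^ k =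
      2 / Real.sqrt (1 - 4 * x) *
        Real.log ((1 + Real.sqrt (1 - 4 * x)) / (2 * Real.sqrt (1 - 4 * x))) := by
  have hsum := hasSum_integral_centralBinom_mul_pow_mul_geom_sum (abs_lt.mpr ⟨hx1, hx2⟩)
  rw [integral_four_mul_div_sqrt_mul_sqrt hx2] at hsum
  refine (hsum.congr_fun fun k => ?_).tsum_eq
  rw [intervalIntegral.integral_const_mul, integral_geom_sum_eq_sum_Icc_inv,
    Nat.centralBinom_eq_two_mul_choose]
  ring
end

section
/- For every real x with -1 < x < 1, \sum_{k=0}^\infty binom(4k,2k) (x/16)^k = sqrt((1 + sqrt(1-x)) / (2(1-x))). -/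
open Finset Finset.Nat

namespace SumChoose4k2k

noncomputable def a (n : ℕ) : ℝ := (Nat.centralBinom n : ℝ)

lemma a_pos (n : ℕ) : 0 < a n := by
  unfold a; exact_mod_cast Nat.centralBinom_pos n

lemma a_zero : a 0 = 1 := by simp [a, Nat.centralBinom]

lemma a_one : a 1 = 2 := by norm_num [a, Nat.centralBinom]

lemma a_two : a 2 = 6 := by norm_num [a, Nat.centralBinom]; rfl

lemma a_rec (n : ℕ) : ((n : ℝ) + 1) * a (n + 1) = 2 * (2 * n + 1) * a n := by
  have h := Nat.succ_mul_centralBinom_succ n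
  have : ((n + 1) * Nat.centralBinom (n + 1) : ℝ) = (2 * (2 * n + 1) * Nat.centralBinom n : ℝ) := by
    exact_mod_cast congrArg (fun m : ℕ => (m : ℝ)) h
  push_cast at this
  push_cast [a]
  linarith

lemma a_succ_le (n : ℕ) : a (n + 1) ≤ 4 * a n := by
  have h := a_rec n
  have hp := a_pos n
  have hp1 := a_pos (n + 1)
  nlinarith [Nat.cast_nonneg (α := ℝ) n]

lemma a_add_two_le (n : ℕ) : a (n + 2) ≤ 16 * a n := by
  have h1 := a_succ_le (n + 1)
  have h2 := a_succ_le n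
  have := a_pos n
  nlinarith

lemma a_le_four_pow (n : ℕ) : a n ≤ 4 ^ n := by
  induction n with
  | zero => simp [a_zero]
  | succ n ih =>
    calc a (n+1) ≤ 4 * a n := a_succ_le n
    _ ≤ 4 * 4 ^ n := by linarith
    _ = 4 ^ (n+1) := by ring

lemma a_two_mul_eq (k : ℕ) : a (2 * k) = (Nat.choose (4 * k) (2 * k) : ℝ) := by
  have : (2 * k).centralBinom = Nat.choose (4 * k) (2 * k) := by
    rw [Nat.centralBinom_eq_two_mul_choose]
    congr 1
    ring
  simp [a, this]

noncomputable def s (n : ℕ) : ℝ := ∑ p ∈ antidiagonal n, a p.1 * a p.2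
noncomputable def B (n : ℕ) : ℝ := ∑ p ∈ antidiagonal n, (p.1 : ℝ) * a p.1 * a p.2
noncomputable def E (n : ℕ) : ℝ := ∑ p ∈ antidiagonal n, (-1) ^ p.1 * a p.1 * a p.2
noncomputable def A (n : ℕ) : ℝ := ∑ p ∈ antidiagonal n, (-1) ^ p.2 * p.1 * a p.1 * a p.2
noncomputable def V (n : ℕ) : ℝ := ∑ p ∈ antidiagonal n, (-1) ^ p.1 * p.1 * a p.1 * a p.2

lemma sign_rel {n : ℕ} {p : ℕ × ℕ} (hp : p ∈ antidiagonal n) :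
    ((-1 : ℝ)) ^ p.2 = (-1) ^ n * (-1) ^ p.1 := by
  have h : p.1 + p.2 = n := mem_antidiagonal.mp hp
  subst h
  have h2 : (-1 : ℝ) ^ p.1 * (-1) ^ p.1 = 1 := by
    rw [← pow_add, ← two_mul, pow_mul]; norm_num
  rw [pow_add]
  linear_combination (-(-1 : ℝ) ^ p.2) * h2

lemma B_succ (n : ℕ) : B (n + 1) = 4 * B n + 2 * s n := by
  rw [B, sum_antidiagonal_succ]
  simp only [Nat.cast_zero, zero_mul]
  rw [show (4 * B n + 2 * s n) = 0 + ∑ p ∈ antidiagonal n, (4 * ((p.1:ℝ) * a p.1 * a p.2) + 2 * (a p.1 * a p.2)) from by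
    rw [Finset.sum_add_distrib, ← Finset.mul_sum, ← Finset.mul_sum, B, s]; ring]
  congr 1
  apply Finset.sum_congr rfl
  intro p _
  push_cast
  linear_combination a p.2 * a_rec p.1

lemma two_B (n : ℕ) : 2 * B n = n * s n := by
  have hswap : B n = ∑ p ∈ antidiagonal n, (p.2 : ℝ) * a p.1 * a p.2 := by
    rw [B, ← Finset.Nat.sum_antidiagonal_swap (f := fun p => (p.1 : ℝ) * a p.1 * a p.2)]
    apply Finset.sum_congr rfl
    intro p _
    simp [Prod.swap]
    ring
  calc 2 * B n = B n + B n := by ring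
  _ = ∑ p ∈ antidiagonal n, ((p.1 : ℝ) + p.2) * a p.1 * a p.2 := by
      nth_rewrite 2 [hswap]
      rw [B, ← Finset.sum_add_distrib]
      apply Finset.sum_congr rfl; intro p _; ring
  _ = n * s n := by
      rw [s, Finset.mul_sum]
      apply Finset.sum_congr rfl
      intro p hp
      have h : p.1 + p.2 = n := mem_antidiagonal.mp hp
      have : ((p.1 : ℝ) + p.2) = n := by exact_mod_cast congrArg (fun m : ℕ => (m : ℝ)) h
      rw [this]; ring

lemma s_zero : s 0 = 1 := by simp [s, a_zero]

lemma s_eq (n : ℕ) : s n = 4 ^ n := by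
  induction n with
  | zero => simpa using s_zero
  | succ n ih =>
    have h1 := B_succ n
    have h2 := two_B (n + 1)
    have h3 := two_B n
    push_cast at h2
    have hn : ((n : ℝ) + 1) * s (n + 1) = ((n : ℝ) + 1) * (4 * s n) := by nlinarith
    have hne : ((n : ℝ) + 1) ≠ 0 := by positivity
    have := mul_left_cancel₀ hne hn
    rw [this, ih]; ring

lemma E_sign (n : ℕ) : E n = (-1) ^ n * E n := by
  have hswap : (∑ p ∈ antidiagonal n, (-1 : ℝ) ^ p.2 * a p.2 * a p.1) = E n :=
    Finset.Nat.sum_antidiagonal_swap (f := fun p => (-1 : ℝ) ^ p.1 * a p.1 * a p.2)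
  calc E n = ∑ p ∈ antidiagonal n, (-1 : ℝ) ^ p.2 * a p.2 * a p.1 := hswap.symm
  _ = ∑ p ∈ antidiagonal n, ((-1 : ℝ) ^ n * ((-1) ^ p.1 * a p.1 * a p.2)) := by
      apply Finset.sum_congr rfl; intro p hp; rw [sign_rel hp]; ring
  _ = (-1) ^ n * E n := by rw [← Finset.mul_sum, E]

lemma E_odd (k : ℕ) : E (2 * k + 1) = 0 := by
  have h := E_sign (2 * k + 1)
  rw [pow_succ, pow_mul] at h
  norm_num at h
  linarith

lemma A_succ (n : ℕ) : A (n + 1) = 4 * A n + 2 * (-1) ^ n * E n := by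
  rw [A, sum_antidiagonal_succ]
  simp only [Nat.cast_zero, mul_zero, zero_mul]
  rw [show (4 * A n + 2 * (-1 : ℝ) ^ n * E n) = 0 + ∑ p ∈ antidiagonal n,
      (4 * ((-1 : ℝ) ^ p.2 * p.1 * a p.1 * a p.2) + 2 * (-1) ^ n * ((-1) ^ p.1 * a p.1 * a p.2)) from by
    rw [Finset.sum_add_distrib, ← Finset.mul_sum, ← Finset.mul_sum, A, E]; ring]
  congr 1
  apply Finset.sum_congr rfl
  intro p hp
  rw [show ((2 : ℝ) * (-1) ^ n * ((-1) ^ p.1 * a p.1 * a p.2)) =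
      2 * ((-1) ^ n * (-1) ^ p.1) * a p.1 * a p.2 from by ring, ← sign_rel hp]
  push_cast
  linear_combination ((-1 : ℝ) ^ p.2 * a p.2) * a_rec p.1

lemma A_eq (n : ℕ) : A n = n * E n - V n := by
  have hswap : (∑ p ∈ antidiagonal n, (-1 : ℝ) ^ p.1 * p.2 * a p.2 * a p.1) = A n :=
    Finset.Nat.sum_antidiagonal_swap (f := fun p => (-1 : ℝ) ^ p.2 * p.1 * a p.1 * a p.2)
  have : A n = ∑ p ∈ antidiagonal n, ((-1 : ℝ) ^ p.1 * (n - p.1) * a p.1 * a p.2) := by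
    rw [← hswap]
    apply Finset.sum_congr rfl
    intro p hp
    have h : p.1 + p.2 = n := mem_antidiagonal.mp hp
    have hc : (p.2 : ℝ) = (n : ℝ) - p.1 := by
      have : ((p.1 + p.2 : ℕ) : ℝ) = (n : ℝ) := by exact_mod_cast congrArg (fun m : ℕ => (m : ℝ)) h
      push_cast at this; linarith
    rw [hc]; ring
  rw [this, E, V, Finset.mul_sum, ← Finset.sum_sub_distrib]
  apply Finset.sum_congr rfl
  intro p _
  ring

lemma V_eq (n : ℕ) : V n = (-1) ^ n * A n := by
  have hswap : (∑ p ∈ antidiagonal n, (-1 : ℝ) ^ p.2 * p.2 * a p.2 * a p.1) = V n :=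
    Finset.Nat.sum_antidiagonal_swap (f := fun p => (-1 : ℝ) ^ p.1 * p.1 * a p.1 * a p.2)
  have h1 : V n = (-1 : ℝ) ^ n * ∑ p ∈ antidiagonal n, ((-1 : ℝ) ^ p.1 * p.2 * a p.1 * a p.2) := by
    rw [← hswap, Finset.mul_sum]
    apply Finset.sum_congr rfl
    intro p hp
    rw [sign_rel hp]; ring
  have h2 : (∑ p ∈ antidiagonal n, ((-1 : ℝ) ^ p.1 * p.2 * a p.1 * a p.2)) = n * E n - V n := by
    rw [E, V, Finset.mul_sum, ← Finset.sum_sub_distrib]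
    apply Finset.sum_congr rfl
    intro p hp
    have h : p.1 + p.2 = n := mem_antidiagonal.mp hp
    have hc : (p.2 : ℝ) = (n : ℝ) - p.1 := by
      have : ((p.1 + p.2 : ℕ) : ℝ) = (n : ℝ) := by exact_mod_cast congrArg (fun m : ℕ => (m : ℝ)) h
      push_cast at this; linarith
    rw [hc]; ring
  rw [h1, h2, ← A_eq]

lemma A_even (k : ℕ) : A (2 * k) = k * E (2 * k) := by
  have h1 := V_eq (2 * k)
  have h2 := A_eq (2 * k)
  rw [pow_mul] at h1
  norm_num at h1
  push_cast at h2 ⊢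
  linarith

lemma E_even (k : ℕ) : E (2 * k) = 4 ^ k * a k := by
  induction k with
  | zero => simp [E, a_zero]
  | succ k ih =>
    have key : ((k : ℝ) + 1) * E (2 * (k + 1)) = 16 * k * E (2 * k) + 8 * E (2 * k) := by
      have h1 : A (2 * (k + 1)) = (k + 1) * E (2 * (k + 1)) := by
        have := A_even (k + 1); push_cast at this ⊢; linarith
      have h2 : A (2 * k + 1 + 1) = 4 * A (2 * k + 1) + 2 * (-1 : ℝ) ^ (2 * k + 1) * E (2 * k + 1) :=
        A_succ (2 * k + 1)
      have h3 : A (2 * k + 1) = 4 * A (2 * k) + 2 * (-1 : ℝ) ^ (2 * k) * E (2 * k) := A_succ (2 * k)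
      have h5 := A_even k
      have hp : ((-1 : ℝ)) ^ (2 * k) = 1 := by rw [pow_mul]; norm_num
      rw [E_odd k] at h2
      rw [hp] at h3
      norm_num at h2
      have h6 : (2 * (k + 1)) = 2 * k + 1 + 1 := by ring
      rw [h6] at h1
      rw [h6]
      push_cast at h5
      nlinarith
    have hne : ((k : ℝ) + 1) ≠ 0 := by positivity
    have target : ((k : ℝ) + 1) * E (2 * (k + 1)) = ((k : ℝ) + 1) * (4 ^ (k + 1) * a (k + 1)) := by
      rw [key, ih]
      have h := a_rec k
      linear_combination (-4 * (4 : ℝ) ^ k) * h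
    exact mul_left_cancel₀ hne target

/-- even-index convolution -/
noncomputable def s' (k : ℕ) : ℝ := ∑ p ∈ antidiagonal k, a (2 * p.1) * a (2 * p.2)

lemma sum_range_parity (h : ℕ → ℝ) (k : ℕ) :
    ∑ p ∈ range (2 * k + 1), h p
      = ∑ i ∈ range (k + 1), h (2 * i) + ∑ i ∈ range k, h (2 * i + 1) := by
  induction k with
  | zero => simp
  | succ k ih =>
    have h6 : 2 * (k + 1) + 1 = (2 * k + 1) + 1 + 1 := by ring
    rw [h6, Finset.sum_range_succ, Finset.sum_range_succ, ih,
      Finset.sum_range_succ (fun i => h (2 * i)) (k + 1),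
      Finset.sum_range_succ (fun i => h (2 * i + 1)) k]
    have e1 : 2 * k + 1 + 1 = 2 * (k + 1) := by ring
    rw [e1]
    ring

lemma two_s' (k : ℕ) : 2 * s' k = s (2 * k) + E (2 * k) := by
  have hs : s (2 * k) = ∑ p ∈ range (2 * k + 1), a p * a (2 * k - p) := by
    rw [s]
    exact Finset.Nat.sum_antidiagonal_eq_sum_range_succ (fun i j => a i * a j) (2 * k)
  have hE : E (2 * k) = ∑ p ∈ range (2 * k + 1), (-1 : ℝ) ^ p * a p * a (2 * k - p) := by
    rw [E]
    exact Finset.Nat.sum_antidiagonal_eq_sum_range_succ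
      (fun i j => (-1 : ℝ) ^ i * a i * a j) (2 * k)
  have hs' : s' k = ∑ i ∈ range (k + 1), a (2 * i) * a (2 * (k - i)) := by
    rw [s']
    exact Finset.Nat.sum_antidiagonal_eq_sum_range_succ (fun i j => a (2 * i) * a (2 * j)) k
  rw [hs, hE, ← Finset.sum_add_distrib]
  rw [show (∑ p ∈ range (2 * k + 1), (a p * a (2 * k - p) + (-1 : ℝ) ^ p * a p * a (2 * k - p)))
      = ∑ p ∈ range (2 * k + 1), ((1 + (-1 : ℝ) ^ p) * (a p * a (2 * k - p))) from by
    apply Finset.sum_congr rfl; intro p _; ring]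
  rw [sum_range_parity (fun p => (1 + (-1 : ℝ) ^ p) * (a p * a (2 * k - p))) k]
  have hodd : (∑ i ∈ range k, (1 + (-1 : ℝ) ^ (2 * i + 1)) * (a (2 * i + 1) * a (2 * k - (2 * i + 1)))) = 0 := by
    apply Finset.sum_eq_zero
    intro i _
    rw [pow_succ, pow_mul]
    norm_num
  rw [hodd, add_zero, hs', Finset.mul_sum]
  apply Finset.sum_congr rfl
  intro i hi
  have hi' : i ≤ k := by
    have := Finset.mem_range.mp hi; omega
  have he : 2 * k - 2 * i = 2 * (k - i) := by omega
  rw [pow_mul]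
  norm_num [he]

lemma s'_eq (k : ℕ) : s' k = (16 ^ k + 4 ^ k * a k) / 2 := by
  have h := two_s' k
  rw [s_eq, E_even] at h
  have : ((4 : ℝ)) ^ (2 * k) = 16 ^ k := by
    rw [pow_mul]; norm_num
  rw [this] at h
  linarith

lemma pos_aux {v : ℕ → ℝ} (hv : Summable v) (h0 : 0 < v 0 + v 1)
    (h : ∀ k, 0 ≤ v (2 * k) + v (2 * k + 1)) : 0 < ∑' n, v n := by
  have he : Summable (fun k => v (2 * k)) :=
    hv.comp_injective (fun a b hab => by omega)
  have ho : Summable (fun k => v (2 * k + 1)) :=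
    hv.comp_injective (fun a b hab => by omega)
  have hs : HasSum v ((∑' k, v (2 * k)) + ∑' k, v (2 * k + 1)) :=
    HasSum.even_add_odd he.hasSum ho.hasSum
  have heq : ∑' n, v n = ∑' k, (v (2 * k) + v (2 * k + 1)) := by
    rw [hs.tsum_eq, Summable.tsum_add he ho]
  rw [heq]
  calc 0 < v (2 * 0) + v (2 * 0 + 1) := by norm_num; exact h0
  _ ≤ ∑' k, (v (2 * k) + v (2 * k + 1)) := Summable.le_tsum (he.add ho) 0 (fun j _ => h j)

end SumChoose4k2k

open SumChoose4k2k Finset Finset.Nat in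
theorem sum_choose_4k_2k (x : ℝ) (hx1 : -1 < x) (hx2 : x < 1) :
    ∑' k : ℕ, (Nat.choose (4 * k) (2 * k) : ℝ) * (x / 16) ^ k =
      Real.sqrt ((1 + Real.sqrt (1 - x)) / (2 * (1 - x))) := by
  have hx : |x| < 1 := abs_lt.mpr ⟨hx1, hx2⟩
  have hgeo : Summable (fun n : ℕ => |x| ^ n) :=
    summable_geometric_of_lt_one (abs_nonneg x) hx
  -- the two series
  set u : ℕ → ℝ := fun k => a (2 * k) * (x / 16) ^ k with hu_def
  set v : ℕ → ℝ := fun n => a n * (x / 4) ^ n with hv_def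
  have hu_norm : Summable (fun k => ‖u k‖) := by
    apply Summable.of_nonneg_of_le (fun k => norm_nonneg _) _ hgeo
    intro k
    have h1 : a (2 * k) ≤ 16 ^ k := by
      have h := a_le_four_pow (2 * k)
      rw [pow_mul] at h
      norm_num at h
      exact h
    have hap : (0:ℝ) < a (2 * k) := a_pos _
    rw [hu_def]
    simp only [norm_mul, norm_pow, Real.norm_eq_abs]
    rw [abs_of_pos hap, abs_div]
    calc a (2*k) * (|x| / |(16:ℝ)|) ^ k ≤ 16 ^ k * (|x| / 16) ^ k := by
          apply mul_le_mul h1 _ (by positivity) (by positivity)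
          norm_num
    _ = |x| ^ k := by
        rw [div_pow, ← mul_div_assoc, mul_comm, mul_div_assoc, div_self (by positivity), mul_one]
  have hu : Summable u := hu_norm.of_norm
  have hv_norm : Summable (fun n => ‖v n‖) := by
    apply Summable.of_nonneg_of_le (fun k => norm_nonneg _) _ hgeo
    intro n
    have h1 : a n ≤ 4 ^ n := a_le_four_pow n
    have hap : (0:ℝ) < a n := a_pos _
    rw [hv_def]
    simp only [norm_mul, norm_pow, Real.norm_eq_abs]
    rw [abs_of_pos hap, abs_div]
    calc a n * (|x| / |(4:ℝ)|) ^ n ≤ 4 ^ n * (|x| / 4) ^ n := by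
          apply mul_le_mul h1 _ (by positivity) (by positivity)
          norm_num
    _ = |x| ^ n := by
        rw [div_pow, ← mul_div_assoc, mul_comm, mul_div_assoc, div_self (by positivity), mul_one]
  have hv : Summable v := hv_norm.of_norm
  have hgeo' : Summable (fun n : ℕ => x ^ n) := by
    apply Summable.of_norm
    simpa using hgeo
  have h1x : (0:ℝ) < 1 - x := by linarith
  -- F and its properties
  set F : ℝ := ∑' n, v n with hF_def
  have hF2 : F * F = (1 - x)⁻¹ := by
    rw [hF_def, tsum_mul_tsum_eq_tsum_sum_antidiagonal_of_summable_norm hv_norm hv_norm]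
    have : ∀ n : ℕ, (∑ p ∈ antidiagonal n, v p.1 * v p.2) = x ^ n := by
      intro n
      have : (∑ p ∈ antidiagonal n, v p.1 * v p.2)
          = ∑ p ∈ antidiagonal n, (a p.1 * a p.2) * (x / 4) ^ n := by
        apply Finset.sum_congr rfl
        intro p hp
        have h : p.1 + p.2 = n := mem_antidiagonal.mp hp
        rw [hv_def]
        simp only
        rw [← h]
        ring
      rw [this, ← Finset.sum_mul]
      have hsn : (∑ p ∈ antidiagonal n, a p.1 * a p.2) = (4:ℝ) ^ n := by
        rw [← s, s_eq]
      rw [hsn, ← mul_pow]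
      congr 1
      field_simp
    rw [tsum_congr this, tsum_geometric_of_norm_lt_one (by simpa using hx)]
  have hFpos : 0 < F := by
    rw [hF_def]
    apply pos_aux hv
    · rw [hv_def]
      simp only
      rw [a_zero, a_one]
      nlinarith
    · intro k
      rw [hv_def]
      simp only
      have e1 : (x / 4) ^ (2 * k + 1) = (x / 4) ^ (2 * k) * (x / 4) := by ring
      have e2 : (0:ℝ) ≤ (x / 4) ^ (2 * k) := by
        rw [pow_mul]; positivity
      have h4 : a (2 * k + 1) ≤ 4 * a (2 * k) := a_succ_le _
      have hap := a_pos (2 * k)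
      have hap1 := a_pos (2 * k + 1)
      have hinner : 0 ≤ a (2 * k) + a (2 * k + 1) * (x / 4) := by
        nlinarith [mul_nonneg hap1.le (show (0:ℝ) ≤ x + 1 by linarith)]
      calc (0:ℝ) ≤ (x / 4) ^ (2 * k) * (a (2 * k) + a (2 * k + 1) * (x / 4)) :=
            mul_nonneg e2 hinner
      _ = a (2 * k) * (x / 4) ^ (2 * k) + a (2 * k + 1) * (x / 4) ^ (2 * k + 1) := by ring
  -- S
  have hLHS : (∑' k : ℕ, (Nat.choose (4 * k) (2 * k) : ℝ) * (x / 16) ^ k) = ∑' k, u k := by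
    apply tsum_congr
    intro k
    rw [hu_def]
    simp only
    rw [a_two_mul_eq]
  set S : ℝ := ∑' k, u k with hS_def
  have hS2 : S * S = ((1 - x)⁻¹ + F) / 2 := by
    rw [hS_def, tsum_mul_tsum_eq_tsum_sum_antidiagonal_of_summable_norm hu_norm hu_norm]
    have key : ∀ n : ℕ, (∑ p ∈ antidiagonal n, u p.1 * u p.2)
        = x ^ n / 2 + v n / 2 := by
      intro n
      have h1 : (∑ p ∈ antidiagonal n, u p.1 * u p.2)
          = ∑ p ∈ antidiagonal n, (a (2 * p.1) * a (2 * p.2)) * (x / 16) ^ n := by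
        apply Finset.sum_congr rfl
        intro p hp
        have h : p.1 + p.2 = n := mem_antidiagonal.mp hp
        rw [hu_def]
        simp only
        rw [← h]
        ring
      rw [h1, ← Finset.sum_mul, ← s', s'_eq]
      have e16 : (16:ℝ) ^ n * (x / 16) ^ n = x ^ n := by
        rw [← mul_pow]
        congr 1
        field_simp
      have e4 : (4:ℝ) ^ n * (x / 16) ^ n = (x / 4) ^ n := by
        rw [← mul_pow]
        congr 1
        field_simp
        ring
      rw [hv_def]
      simp only
      linear_combination ((1:ℝ)/2) * e16 + (a n / 2) * e4
    rw [tsum_congr key]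
    rw [Summable.tsum_add (hgeo'.div_const 2) (hv.div_const 2)]
    rw [tsum_div_const, tsum_div_const]
    rw [tsum_geometric_of_norm_lt_one (by simpa using hx), hF_def]
    ring
  have hSpos : 0 < S := by
    rw [hS_def]
    apply pos_aux hu
    · rw [hu_def]
      simp only
      rw [show 2 * 0 = 0 by norm_num, show (2:ℕ) * 1 = 2 by norm_num, a_zero, a_two]
      nlinarith
    · intro k
      rw [hu_def]
      simp only
      have e1 : (x / 16) ^ (2 * k + 1) = (x / 16) ^ (2 * k) * (x / 16) := by ring
      have e2 : (0:ℝ) ≤ (x / 16) ^ (2 * k) := by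
        rw [pow_mul]; positivity
      have h4 : a (2 * (2 * k + 1)) ≤ 16 * a (2 * (2 * k)) := by
        have := a_add_two_le (2 * (2 * k))
        have e : 2 * (2 * k) + 2 = 2 * (2 * k + 1) := by ring
        rwa [e] at this
      have hap := a_pos (2 * (2 * k))
      have hap1 := a_pos (2 * (2 * k + 1))
      have hinner : 0 ≤ a (2 * (2 * k)) + a (2 * (2 * k + 1)) * (x / 16) := by
        nlinarith [mul_nonneg hap1.le (show (0:ℝ) ≤ x + 1 by linarith)]
      calc (0:ℝ) ≤ (x / 16) ^ (2 * k) * (a (2 * (2 * k)) + a (2 * (2 * k + 1)) * (x / 16)) :=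
            mul_nonneg e2 hinner
      _ = a (2 * (2 * k)) * (x / 16) ^ (2 * k) + a (2 * (2 * k + 1)) * (x / 16) ^ (2 * k + 1) := by ring
  -- final algebra
  set t : ℝ := Real.sqrt (1 - x) with ht_def
  have htpos : 0 < t := Real.sqrt_pos.mpr h1x
  have ht2 : t * t = 1 - x := Real.mul_self_sqrt h1x.le
  have hFt : F = 1 / t := by
    have h : F * F = (1 / t) * (1 / t) := by
      rw [hF2]
      field_simp
      linarith [ht2]
    rcases mul_self_eq_mul_self_iff.mp h with h' | h'
    · exact h'
    · exfalso
      have : (0:ℝ) < 1 / t := by positivity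
      linarith
  set R : ℝ := Real.sqrt ((1 + t) / (2 * (1 - x))) with hR_def
  have hRnn : 0 ≤ R := Real.sqrt_nonneg _
  have hR2 : R * R = (1 + t) / (2 * (1 - x)) := by
    rw [hR_def]
    apply Real.mul_self_sqrt
    positivity
  have htne : t ≠ 0 := ne_of_gt htpos
  have hsq : S * S = R * R := by
    rw [hS2, hR2, hFt, ← ht2]
    rw [div_eq_div_iff (by positivity) (by positivity)]
    field_simp
  rw [hLHS]
  rcases mul_self_eq_mul_self_iff.mp hsq with h' | h'
  · exact h'
  · linarith
end

section
/- Let m and n be positive integers and p an odd prime. Then \sum_{k=0}^{(p-1)/2} (4k+1) binom((p-1)/2, k)^n H_{2k}^{(2m-1)} \equiv 0 (mod p), in the sense that the numerator of this rational number is divisible by p, provided p does not divide 2^{2m-1} - 1. -/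
/-!
Write `r = 2m - 1`, `d = (p - 1) / 2` and `H_t = ∑_{j=1}^t 1/j^r`. In `𝔽_p` the involution
`j ↦ p - j` negates `1/j^r` because `r` is odd, so `H_{p-1} = 0` and `H_{p-1-t} = H_t`.
Under `k ↦ d - k` we have `binom(d, d-k) = binom(d, k)`, `H_{2(d-k)} = H_{p-1-2k} = H_{2k}` and
`4(d-k) + 1 = 2p - (4k + 1) ≡ -(4k + 1)`, so the sum equals its own negative in `𝔽_p` and
vanishes, `p` being odd. Multiplying the rational sum by `((p - 1)!)^r`, which is prime to `p`,
gives an integer whose reduction mod `p` is that vanishing sum.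
-/

open Finset
open scoped Nat

theorem Finset.sum_Ico_reflect_eq_neg {M : Type*} [AddCommGroup M] (f : ℕ → M) {N k m : ℕ}
    (hf : ∀ j ≤ N, f (N - j) = -f j) (hm : m ≤ N + 1) :
    ∑ j ∈ Ico (N + 1 - m) (N + 1 - k), f j = -∑ j ∈ Ico k m, f j := by
  rw [← sum_Ico_reflect f k hm, ← sum_neg_distrib]
  exact sum_congr rfl fun j hj => hf j (by simp only [mem_Ico] at hj; omega)

theorem ZMod.eq_zero_of_neg_eq_self {n : ℕ} (hn : Odd n) {a : ZMod n} (h : -a = a) : a = 0 := by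
  refine ((ZMod.neg_eq_self_iff a).mp h).resolve_right fun h2 => ?_
  exact Nat.not_even_iff_odd.mpr hn ⟨a.val, by omega⟩

theorem Rat.natCast_dvd_num_of_mul_eq {p D T : ℕ} (hp : p.Prime) {q : ℚ} (hD : ¬ p ∣ D)
    (h : q * D = T) (hT : p ∣ T) : (p : ℤ) ∣ q.num := by
  have hnum : q.num * D = T * q.den := by
    have : (q.num : ℚ) * D = T * q.den := by rw [← Rat.mul_den_eq_num, ← h]; ring
    exact_mod_cast this
  have hpT : (p : ℤ) ∣ q.num * D :=
    hnum ▸ dvd_mul_of_dvd_left (Int.natCast_dvd_natCast.mpr hT) _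
  exact (Int.Prime.dvd_mul' hp hpT).resolve_right (by exact_mod_cast hD)

def harmonicPow (K : Type*) [DivisionRing K] (r t : ℕ) : K :=
  ∑ j ∈ Icc 1 t, ((j : K) ^ r)⁻¹

def choosePowHarmonicSum (K : Type*) [DivisionRing K] (n r d : ℕ) : K :=
  ∑ k ∈ range (d + 1), (4 * (k : K) + 1) * (d.choose k : K) ^ n * harmonicPow K r (2 * k)

section Field

variable {K : Type*} [Field K]

theorem harmonicPow_mul_factorial_pow {r t N : ℕ} (ht : t ≤ N) (hN : (N ! : K) ≠ 0) :
    harmonicPow K r t * (N ! : K) ^ r = ∑ j ∈ Icc 1 t, ((N ! / j : ℕ) : K) ^ r := by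
  rw [harmonicPow, sum_mul]
  refine sum_congr rfl fun j hj => ?_
  obtain ⟨hj1, hjt⟩ := mem_Icc.mp hj
  have hdvd : j ∣ N ! := Nat.dvd_factorial hj1 (hjt.trans ht)
  have hj0 : (j : K) ≠ 0 := fun h => hN (by obtain ⟨c, hc⟩ := hdvd; simp [hc, h])
  rw [Nat.cast_div hdvd hj0, div_pow, div_eq_inv_mul]

theorem choosePowHarmonicSum_mul_factorial_pow (n r : ℕ) {d N : ℕ} (hd : 2 * d ≤ N)
    (hN : (N ! : K) ≠ 0) :
    choosePowHarmonicSum K n r d * (N ! : K) ^ r =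
      ((∑ k ∈ range (d + 1), (4 * k + 1) * d.choose k ^ n *
        ∑ j ∈ Icc 1 (2 * k), (N ! / j) ^ r : ℕ) : K) := by
  rw [choosePowHarmonicSum, sum_mul]
  push_cast
  refine sum_congr rfl fun k hk => ?_
  rw [mul_assoc, harmonicPow_mul_factorial_pow _ hN]
  simp only [mem_range] at hk
  omega

end Field

section ZMod

variable {p : ℕ} [Fact p.Prime]

theorem ZMod.inv_pow_natCast_sub_self {r j : ℕ} (hr : Odd r) (hj : j ≤ p) :
    (((p - j : ℕ) : ZMod p) ^ r)⁻¹ = -((j : ZMod p) ^ r)⁻¹ := by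
  rw [Nat.cast_sub hj, ZMod.natCast_self, zero_sub, hr.neg_pow, inv_neg]

theorem harmonicPow_zmod_sub (hp : Odd p) {r t : ℕ} (hr : Odd r) (ht : t < p) :
    harmonicPow (ZMod p) r (p - 1 - t) = harmonicPow (ZMod p) r t := by
  set f : ℕ → ZMod p := fun j => ((j : ZMod p) ^ r)⁻¹
  have hf : ∀ j ≤ p, f (p - j) = -f j := fun j hj => ZMod.inv_pow_natCast_sub_self hr hj
  have hfull : ∑ j ∈ Ico 1 p, f j = 0 := by
    refine ZMod.eq_zero_of_neg_eq_self hp ?_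
    simpa using (sum_Ico_reflect_eq_neg f hf (k := 1) (m := p) (by omega)).symm
  have htail : ∑ j ∈ Ico 1 (p - t), f j = -∑ j ∈ Ico (t + 1) p, f j := by
    simpa [Nat.add_sub_add_right] using
      sum_Ico_reflect_eq_neg f hf (k := t + 1) (m := p) (by omega)
  have hsplit := sum_Ico_consecutive f (m := 1) (n := t + 1) (k := p) (by omega) (by omega)
  rw [harmonicPow, harmonicPow, ← Ico_add_one_right_eq_Icc, ← Ico_add_one_right_eq_Icc,
    show p - 1 - t + 1 = p - t by omega]
  change ∑ j ∈ Ico 1 (p - t), f j = ∑ j ∈ Ico 1 (t + 1), f j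
  linear_combination htail - hsplit - hfull

theorem choosePowHarmonicSum_zmod_eq_zero (hp : Odd p) (n : ℕ) {r : ℕ} (hr : Odd r) :
    choosePowHarmonicSum (ZMod p) n r ((p - 1) / 2) = 0 := by
  set d := (p - 1) / 2
  have hpd : 2 * d + 1 = p := by obtain ⟨c, hc⟩ := hp; omega
  have htwo : 2 * (d : ZMod p) + 1 = 0 := by
    have : ((2 * d + 1 : ℕ) : ZMod p) = 0 := by rw [hpd, ZMod.natCast_self]
    exact_mod_cast this
  set f : ℕ → ZMod p := fun k =>
    (4 * (k : ZMod p) + 1) * (d.choose k : ZMod p) ^ n * harmonicPow (ZMod p) r (2 * k)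
  have hf : ∀ k ≤ d, f (d - k) = -f k := by
    intro k hk
    have hH : harmonicPow (ZMod p) r (2 * (d - k)) = harmonicPow (ZMod p) r (2 * k) := by
      rw [show 2 * (d - k) = p - 1 - 2 * k by omega]
      exact harmonicPow_zmod_sub hp hr (by omega)
    simp only [f, Nat.choose_symm hk, hH, Nat.cast_sub hk]
    linear_combination (2 * (d.choose k : ZMod p) ^ n * harmonicPow (ZMod p) r (2 * k)) * htwo
  refine ZMod.eq_zero_of_neg_eq_self hp ?_
  simpa [choosePowHarmonicSum, Nat.Ico_zero_eq_range] using
    (sum_Ico_reflect_eq_neg f hf (k := 0) le_rfl).symm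

end ZMod

theorem sum_4k1_choose_harmonic_odd_order_general (m n : ℕ) (hm : 0 < m)
    (p : ℕ) (hp : p.Prime) (hodd : Odd p) :
    (p : ℤ) ∣
      (∑ k ∈ Finset.range ((p - 1) / 2 + 1),
          (4 * (k : ℚ) + 1) * (Nat.choose ((p - 1) / 2) k : ℚ) ^ n *
            ∑ j ∈ Finset.Icc 1 (2 * k), (1 : ℚ) / (j : ℚ) ^ (2 * m - 1)).num := by
  have := Fact.mk hp
  have hr : Odd (2 * m - 1) := ⟨m - 1, by omega⟩
  have hd : 2 * ((p - 1) / 2) ≤ p - 1 := Nat.mul_div_le _ _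
  have hfact : ¬ p ∣ (p - 1)! := by rw [hp.dvd_factorial]; have := hp.one_lt; omega
  have hQ := choosePowHarmonicSum_mul_factorial_pow (K := ℚ) n (2 * m - 1) hd (by positivity)
  have hZ := choosePowHarmonicSum_mul_factorial_pow (K := ZMod p) n (2 * m - 1) hd
    (by rwa [Ne, ZMod.natCast_eq_zero_iff])
  rw [choosePowHarmonicSum_zmod_eq_zero hodd n hr, zero_mul, eq_comm,
    ZMod.natCast_eq_zero_iff] at hZ
  refine Rat.natCast_dvd_num_of_mul_eq (D := (p - 1)! ^ (2 * m - 1)) hp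
    (mt hp.dvd_of_dvd_pow hfact) ?_ hZ
  simpa only [choosePowHarmonicSum, harmonicPow, one_div, Nat.cast_pow] using hQ

theorem sum_4k1_choose_harmonic_odd_order (m n : ℕ) (hm : 0 < m) (hn : 0 < n)
    (p : ℕ) (hp : p.Prime) (hodd : Odd p) (hdvd : ¬ (p : ℤ) ∣ 2 ^ (2 * m - 1) - 1) :
    (p : ℤ) ∣
      (∑ k ∈ Finset.range ((p - 1) / 2 + 1),
          (4 * (k : ℚ) + 1) * (Nat.choose ((p - 1) / 2) k : ℚ) ^ n *
            ∑ j ∈ Finset.Icc 1 (2 * k), (1 : ℚ) / (j : ℚ) ^ (2 * m - 1)).num :=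
  sum_4k1_choose_harmonic_odd_order_general m n hm p hp hodd
end
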